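/- arXiv:2405.12733 — 13 statements merged into one kernel-verified Lean document; each statement's English description precedes it below -/
import Mathlib

section
/- For every integer t ≥ 1, the list-distinguishing chromatic number of the path P_{2t} on 2t vertices equals 2. -/
open SimpleGraph

/-- `f` is a proper coloring of `G` preserved by no nontrivial automorphism of `G`. -/
def IsProperDistinguishing {V : Type*} (G : SimpleGraph V) (f : V → ℕ) : Prop :=
  (∀ ⦃u w : V⦄, G.Adj u w → f u ≠ f w) ∧
    ∀ φ : G ≃g G, (∀ v, f (φ v) = f v) → ∀ v, φ v = v

/-- `G` is properly `L`-distinguishable for every list assignment with all lists of size `k`. -/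
def ProperlyListDistinguishable {V : Type*} (G : SimpleGraph V) (k : ℕ) : Prop :=
  ∀ L : V → Finset ℕ, (∀ v, (L v).card = k) →
    ∃ f : V → ℕ, (∀ v, f v ∈ L v) ∧ IsProperDistinguishing G f

/-- The list-distinguishing chromatic number `χ_{D_L}(G)`. -/
noncomputable def listDistChromNum {V : Type*} (G : SimpleGraph V) : ℕ :=
  sInf {k | ProperlyListDistinguishable G k}

/-! ### Auxiliary lemmas -/

/-- Greedy proper list coloring of a path with lists of size ≥ 2. -/
lemma exists_proper_list_coloring (n : ℕ) (L : Fin n → Finset ℕ)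
    (hL : ∀ v, 2 ≤ (L v).card) :
    ∃ f : Fin n → ℕ, (∀ v, f v ∈ L v) ∧
      ∀ ⦃u w : Fin n⦄, (pathGraph n).Adj u w → f u ≠ f w := by
  classical
  set L' : ℕ → Finset ℕ := fun i => if h : i < n then L ⟨i, h⟩ else {0, 1} with hL'def
  have hL' : ∀ i, 2 ≤ (L' i).card := by
    intro i
    simp only [hL'def]
    split
    · exact hL _
    · simp
  have hne : ∀ i (c : ℕ), ((L' i).erase c).Nonempty := by
    intro i c
    rw [← Finset.card_pos]
    have h1 := Finset.pred_card_le_card_erase (s := L' i) (a := c)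
    have := hL' i
    omega
  have hne0 : (L' 0).Nonempty := by
    rw [← Finset.card_pos]; have := hL' 0; omega
  let g : ℕ → ℕ := fun i =>
    Nat.rec ((L' 0).min' hne0) (fun j prev => ((L' (j + 1)).erase prev).min' (hne _ _)) i
  have hg0 : g 0 ∈ L' 0 := Finset.min'_mem _ _
  have hgs : ∀ j, g (j + 1) ∈ (L' (j + 1)).erase (g j) := fun j => Finset.min'_mem _ _
  have hgmem : ∀ i, g i ∈ L' i := by
    intro i
    cases i with
    | zero => exact hg0
    | succ j => exact Finset.mem_of_mem_erase (hgs j)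
  have hgne : ∀ j, g (j + 1) ≠ g j := fun j => Finset.ne_of_mem_erase (hgs j)
  refine ⟨fun v => g v.val, ?_, ?_⟩
  · intro v
    have := hgmem v.val
    simpa [hL'def, v.isLt] using this
  · intro u w hadj
    rw [pathGraph_adj] at hadj
    show g u.val ≠ g w.val
    rcases hadj with h | h
    · rw [← h]
      exact (hgne u.val).symm
    · rw [← h]
      exact hgne w.val
/-- The reversal automorphism of the path graph. -/
def revIso (n : ℕ) : pathGraph n ≃g pathGraph n where
  toEquiv := Fin.revPerm
  map_rel_iff' := by
    intro i j
    have hi := i.isLt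
    have hj := j.isLt
    simp only [Fin.revPerm_apply, pathGraph_adj, Fin.val_rev]
    omega

lemma aut_fix_zero {n : ℕ} (hn : 0 < n) (φ : pathGraph n ≃g pathGraph n)
    (h0 : (φ ⟨0, hn⟩).val = 0) : ∀ i : Fin n, φ i = i := by
  suffices h : ∀ k, ∀ hk : k < n, φ ⟨k, hk⟩ = ⟨k, hk⟩ by
    intro i
    have := h i.val i.isLt
    simpa using this
  intro k
  induction k using Nat.strong_induction_on with
  | _ k IH =>
  intro hk
  match k, hk, IH with
  | 0, hk, IH => exact Fin.ext h0
  | 1, hk, IH =>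
    have hadj : (pathGraph n).Adj ⟨0, hn⟩ ⟨1, hk⟩ := by
      rw [pathGraph_adj]; left; rfl
    have hadj2 : (pathGraph n).Adj (φ ⟨0, hn⟩) (φ ⟨1, hk⟩) := φ.map_rel_iff.mpr hadj
    rw [pathGraph_adj, h0] at hadj2
    apply Fin.ext
    simp only []
    omega
  | m + 2, hk, IH =>
    have hj : m + 1 < n := by omega
    have hp : m < n := by omega
    have hφj : φ ⟨m + 1, hj⟩ = ⟨m + 1, hj⟩ := IH (m + 1) (by omega) hj
    have hφp : φ ⟨m, hp⟩ = ⟨m, hp⟩ := IH m (by omega) hp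
    have hadj : (pathGraph n).Adj ⟨m + 1, hj⟩ ⟨m + 2, hk⟩ := by
      rw [pathGraph_adj]; left; rfl
    have hadj2 : (pathGraph n).Adj (φ ⟨m + 1, hj⟩) (φ ⟨m + 2, hk⟩) := φ.map_rel_iff.mpr hadj
    rw [hφj, pathGraph_adj] at hadj2
    simp only [Fin.val_mk] at hadj2
    rcases hadj2 with hc | hc
    · exact Fin.ext hc.symm
    · exfalso
      have heq : φ ⟨m + 2, hk⟩ = ⟨m, hp⟩ := Fin.ext (by show _ = m; omega)
      rw [← hφp] at heq
      have := φ.injective heq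
      simp only [Fin.mk.injEq] at this
      omega

lemma aut_zero_endpoint {n : ℕ} (hn : 0 < n) (φ : pathGraph n ≃g pathGraph n) :
    (φ ⟨0, hn⟩).val = 0 ∨ (φ ⟨0, hn⟩).val = n - 1 := by
  by_contra hcon
  push_neg at hcon
  obtain ⟨h1, h2⟩ := hcon
  have hvlt := (φ ⟨0, hn⟩).isLt
  have ha : (φ ⟨0, hn⟩).val - 1 < n := by omega
  have hb : (φ ⟨0, hn⟩).val + 1 < n := by omega
  have hadja : (pathGraph n).Adj (φ ⟨0, hn⟩) ⟨(φ ⟨0, hn⟩).val - 1, ha⟩ := by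
    rw [pathGraph_adj]; right; simp only []; omega
  have hadjb : (pathGraph n).Adj (φ ⟨0, hn⟩) ⟨(φ ⟨0, hn⟩).val + 1, hb⟩ := by
    rw [pathGraph_adj]; left; rfl
  have hsa := φ.symm.map_rel_iff.mpr hadja
  have hsb := φ.symm.map_rel_iff.mpr hadjb
  rw [φ.symm_apply_apply, pathGraph_adj] at hsa hsb
  simp only [Fin.val_mk] at hsa hsb
  have heq : φ.symm ⟨(φ ⟨0, hn⟩).val - 1, ha⟩ = φ.symm ⟨(φ ⟨0, hn⟩).val + 1, hb⟩ :=
    Fin.ext (by omega)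
  have := φ.symm.injective heq
  simp only [Fin.mk.injEq] at this
  omega

lemma aut_cases {n : ℕ} (hn : 0 < n) (φ : pathGraph n ≃g pathGraph n) :
    (∀ i : Fin n, φ i = i) ∨ (∀ i : Fin n, φ i = i.rev) := by
  rcases aut_zero_endpoint hn φ with h | h
  · exact Or.inl (aut_fix_zero hn φ h)
  · right
    set ψ : pathGraph n ≃g pathGraph n := φ.trans (revIso n) with hψ
    have hψ0 : (ψ ⟨0, hn⟩).val = 0 := by
      show ((revIso n) (φ ⟨0, hn⟩)).val = 0
      show (Fin.rev (φ ⟨0, hn⟩)).val = 0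
      rw [Fin.val_rev, h]
      omega
    have hfix := aut_fix_zero hn ψ hψ0
    intro i
    have := hfix i
    have hrev : Fin.rev (φ i) = i := this
    have := congrArg Fin.rev hrev
    rwa [Fin.rev_rev] at this

theorem stmt_0 (t : ℕ) (ht : 1 ≤ t) :
    listDistChromNum (pathGraph (2 * t)) = 2 := by
  have hn : 0 < 2 * t := by omega
  have h2 : ProperlyListDistinguishable (pathGraph (2 * t)) 2 := by
    intro L hL
    obtain ⟨f, hf, hprop⟩ := exists_proper_list_coloring (2 * t) L (fun v => (hL v).ge)
    refine ⟨f, hf, hprop, ?_⟩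
    intro φ hφ v
    rcases aut_cases hn φ with h | h
    · exact h v
    · exfalso
      have ht1 : t - 1 < 2 * t := by omega
      have ht2 : t < 2 * t := by omega
      have hkey := hφ ⟨t - 1, ht1⟩
      rw [h] at hkey
      have hrv : (Fin.rev (⟨t - 1, ht1⟩ : Fin (2 * t))) = ⟨t, ht2⟩ := by
        apply Fin.ext
        rw [Fin.val_rev]
        simp
        omega
      rw [hrv] at hkey
      have hadj : (pathGraph (2 * t)).Adj ⟨t - 1, ht1⟩ ⟨t, ht2⟩ := by
        rw [pathGraph_adj]; left; simp; omega
      exact hprop hadj hkey.symm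
  have hmem : 2 ∈ {k | ProperlyListDistinguishable (pathGraph (2 * t)) k} := h2
  unfold listDistChromNum
  refine le_antisymm (Nat.sInf_le hmem) (le_csInf ⟨2, hmem⟩ ?_)
  intro k hk
  by_contra hlt
  push_neg at hlt
  interval_cases k
  · obtain ⟨f, hf, -⟩ := hk (fun _ => ∅) (fun _ => rfl)
    exact absurd (hf ⟨0, hn⟩) (by simp)
  · obtain ⟨f, hf, hprop, -⟩ := hk (fun _ => {0}) (fun _ => rfl)
    have h1lt : 1 < 2 * t := by omega
    have hadj : (pathGraph (2 * t)).Adj ⟨0, hn⟩ ⟨1, h1lt⟩ := by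
      rw [pathGraph_adj]; left; rfl
    have h0 := hf ⟨0, hn⟩
    have h1 := hf ⟨1, h1lt⟩
    simp only [Finset.mem_singleton] at h0 h1
    exact hprop hadj (h0.trans h1.symm)
end

section
/- The list-distinguishing chromatic number of the 4-cycle C_4 equals 4. -/
open SimpleGraph

/-- The reflection of `C₄` swapping `0` and `2`. -/
def swap02 : cycleGraph 4 ≃g cycleGraph 4 :=
  ⟨Equiv.swap 0 2, by decide⟩

/-- The reflection of `C₄` swapping `1` and `3`. -/
def swap13 : cycleGraph 4 ≃g cycleGraph 4 :=
  ⟨Equiv.swap 1 3, by decide⟩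

lemma upper : ProperlyListDistinguishable (cycleGraph 4) 4 := by
  intro L hL
  obtain ⟨a0, ha0⟩ := Finset.card_pos.mp (by rw [hL 0]; norm_num)
  obtain ⟨a1, ha1⟩ := Finset.card_pos.mp (show 0 < (L 1 \ {a0}).card by
    have h := Finset.le_card_sdiff ({a0} : Finset ℕ) (L 1)
    have h1 := hL 1
    simp [Finset.card_singleton] at h
    omega)
  obtain ⟨a2, ha2⟩ := Finset.card_pos.mp (show 0 < (L 2 \ {a0, a1}).card by
    have h := Finset.le_card_sdiff ({a0, a1} : Finset ℕ) (L 2)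
    have h1 := hL 2
    have h2 : ({a0, a1} : Finset ℕ).card ≤ 2 := by
      apply le_trans (Finset.card_insert_le _ _); simp
    omega)
  obtain ⟨a3, ha3⟩ := Finset.card_pos.mp (show 0 < (L 3 \ {a0, a1, a2}).card by
    have h := Finset.le_card_sdiff ({a0, a1, a2} : Finset ℕ) (L 3)
    have h1 := hL 3
    have h2 : ({a0, a1, a2} : Finset ℕ).card ≤ 3 := by
      apply le_trans (Finset.card_insert_le _ _)
      have := Finset.card_insert_le a1 ({a2} : Finset ℕ)
      simp at this ⊢; omega
    omega)
  rw [Finset.mem_sdiff] at ha1 ha2 ha3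
  have d1 : a1 ≠ a0 := by simpa using ha1.2
  have d2 : a2 ≠ a0 ∧ a2 ≠ a1 := by
    constructor <;> intro h <;> exact ha2.2 (by simp [h])
  have d3 : a3 ≠ a0 ∧ a3 ≠ a1 ∧ a3 ≠ a2 := by
    refine ⟨?_, ?_, ?_⟩ <;> intro h <;> exact ha3.2 (by simp [h])
  refine ⟨![a0, a1, a2, a3], ?_, ?_, ?_⟩
  · intro v; fin_cases v <;> simp_all
  · intro u w hadj h
    have hne : u ≠ w := hadj.ne
    fin_cases u <;> fin_cases w <;> simp_all
  · intro φ hφ v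
    have hinj : Function.Injective ![a0, a1, a2, a3] := by
      intro u w h
      fin_cases u <;> fin_cases w <;> simp_all
    exact hinj (hφ v)

lemma lower (k : ℕ) (hk : ProperlyListDistinguishable (cycleGraph 4) k) : 4 ≤ k := by
  by_contra h
  push_neg at h
  obtain ⟨f, hmem, hproper, hdist⟩ := hk (fun _ => Finset.range k) (fun _ => Finset.card_range k)
  have hf : ∀ v, f v < k := fun v => Finset.mem_range.mp (hmem v)
  by_cases h02 : f 0 = f 2
  · have := hdist swap02 (fun v => by
      fin_cases v <;> simp [swap02, Equiv.swap_apply_def, h02] <;> rfl) 0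
    simp [swap02] at this
  · by_cases h13 : f 1 = f 3
    · have := hdist swap13 (fun v => by
        fin_cases v <;> simp [swap13, Equiv.swap_apply_def, h13] <;> rfl) 1
      simp [swap13] at this
    · -- all four values distinct, but all < k ≤ 3
      have a01 : f 0 ≠ f 1 := hproper (by decide)
      have a12 : f 1 ≠ f 2 := hproper (by decide)
      have a23 : f 2 ≠ f 3 := hproper (by decide)
      have a30 : f 3 ≠ f 0 := (hproper (by decide)).symm
      have a03 : f 0 ≠ f 3 := fun h => a30 h.symm
      have hcard : ({f 0, f 1, f 2, f 3} : Finset ℕ).card = 4 := by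
        rw [Finset.card_insert_of_notMem (by simp_all),
            Finset.card_insert_of_notMem (by simp_all),
            Finset.card_insert_of_notMem (by simp_all), Finset.card_singleton]
      have hsub : ({f 0, f 1, f 2, f 3} : Finset ℕ) ⊆ Finset.range k := by
        intro x hx
        simp only [Finset.mem_insert, Finset.mem_singleton] at hx
        rcases hx with h | h | h | h <;> subst h <;> exact hmem _
      have := Finset.card_le_card hsub
      rw [hcard, Finset.card_range] at this
      omega

theorem stmt_2 : listDistChromNum (cycleGraph 4) = 4 := by
  have h1 : 4 ∈ {k | ProperlyListDistinguishable (cycleGraph 4) k} := upper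
  apply le_antisymm
  · exact csInf_le (OrderBot.bddBelow _) h1
  · exact le_csInf ⟨4, h1⟩ fun k hk => lower k hk
end

section
/- Let L be an assignment of lists of size 3 to the vertices of the cycle C_5 such that the union of all lists has more than 3 colors. Then C_5 admits a proper distinguishing coloring choosing each vertex's color from its list. -/
open SimpleGraph

set_option maxRecDepth 4000 in
lemma aux1 : ∀ e : Equiv.Perm (Fin 5),
    (∀ u w : Fin 5, (cycleGraph 5).Adj u w ↔ (cycleGraph 5).Adj (e u) (e w)) →
    (∃ v, e v ≠ v) →
    ∃ v, (cycleGraph 5).Adj v (e v) ∨ (cycleGraph 5).Adj v (e (e v)) := by decide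


lemma erase_nonempty {s : Finset ℕ} {a : ℕ} (h : 2 ≤ s.card) : (s.erase a).Nonempty := by
  rw [← Finset.card_pos]
  have := Finset.pred_card_le_card_erase (s := s) (a := a)
  omega

lemma erase2_nonempty {s : Finset ℕ} {a b : ℕ} (h : 3 ≤ s.card) :
    ((s.erase a).erase b).Nonempty := by
  rw [← Finset.card_pos]
  have h1 := Finset.pred_card_le_card_erase (s := s) (a := a)
  have h2 := Finset.pred_card_le_card_erase (s := s.erase a) (a := b)
  omega


theorem stmt_3 (L : Fin 5 → Finset ℕ) (hL : ∀ v, (L v).card = 3)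
    (hU : 3 < (Finset.univ.biUnion L).card) :
    ∃ f : Fin 5 → ℕ, (∀ v, f v ∈ L v) ∧ IsProperDistinguishing (cycleGraph 5) f := by
  obtain ⟨c0, hc0⟩ : (L 0).Nonempty := by rw [← Finset.card_pos, hL]; norm_num
  obtain ⟨c1, hc1⟩ : ((L 1).erase c0).Nonempty := erase_nonempty (by rw [hL]; norm_num)
  obtain ⟨c2, hc2⟩ : ((L 2).erase c1).Nonempty := erase_nonempty (by rw [hL]; norm_num)
  obtain ⟨c3, hc3⟩ : ((L 3).erase c2).Nonempty := erase_nonempty (by rw [hL]; norm_num)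
  obtain ⟨c4, hc4⟩ : (((L 4).erase c3).erase c0).Nonempty := erase2_nonempty (by rw [hL])
  have h1 : c1 ≠ c0 := Finset.ne_of_mem_erase hc1
  have h2 : c2 ≠ c1 := Finset.ne_of_mem_erase hc2
  have h3 : c3 ≠ c2 := Finset.ne_of_mem_erase hc3
  have h4 : c4 ≠ c0 := Finset.ne_of_mem_erase hc4
  have h5 : c4 ≠ c3 := Finset.ne_of_mem_erase (Finset.mem_of_mem_erase hc4)
  have hproper : ∀ ⦃u w : Fin 5⦄, (cycleGraph 5).Adj u w →
      (![c0, c1, c2, c3, c4] : Fin 5 → ℕ) u ≠ ![c0, c1, c2, c3, c4] w := by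
    intro u w hadj
    fin_cases u <;> fin_cases w <;>
      first
        | exact absurd hadj (by decide)
        | exact h1 | exact h1.symm | exact h2 | exact h2.symm | exact h3 | exact h3.symm
        | exact h4 | exact h4.symm | exact h5 | exact h5.symm
  refine ⟨![c0, c1, c2, c3, c4], ?_, hproper, ?_⟩
  · intro v
    fin_cases v
    · exact hc0
    · exact Finset.mem_of_mem_erase hc1
    · exact Finset.mem_of_mem_erase hc2
    · exact Finset.mem_of_mem_erase hc3
    · exact Finset.mem_of_mem_erase (Finset.mem_of_mem_erase hc4)
  · intro φ hpres
    by_contra hcon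
    push_neg at hcon
    obtain ⟨v, hv⟩ := aux1 φ.toEquiv (fun u w => (φ.map_adj_iff).symm) hcon
    rcases hv with hv | hv
    · exact hproper hv ((hpres v).symm)
    · have : (![c0, c1, c2, c3, c4] : Fin 5 → ℕ) (φ (φ v)) = ![c0, c1, c2, c3, c4] v := by
        rw [hpres, hpres]
      exact hproper hv this.symm
end

section
/- Let L be an assignment of lists of size 4 to the vertices of the cycle C_6 such that the union of all lists has more than 4 colors. Then C_6 admits a proper distinguishing coloring choosing each vertex's color from its list. -/
open SimpleGraph

set_option maxRecDepth 40000
set_option maxHeartbeats 1000000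

def vec6 (x0 x1 x2 x3 x4 x5 : ℕ) (v : Fin 6) : ℕ :=
  if v.val = 0 then x0 else if v.val = 1 then x1 else if v.val = 2 then x2
  else if v.val = 3 then x3 else if v.val = 4 then x4 else x5

/-- A pattern on `Fin 6` that is a proper coloring of `C₆` and is preserved by no
nontrivial adjacency-preserving permutation. -/
def GoodPat (pat : Fin 6 → ℕ) : Prop :=
  (∀ u v : Fin 6, (cycleGraph 6).Adj u v → pat u ≠ pat v) ∧
  ∀ e : Equiv.Perm (Fin 6),
    (∀ u v : Fin 6, (cycleGraph 6).Adj u v → (cycleGraph 6).Adj (e u) (e v)) →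
    (∀ v, pat (e v) = pat v) → ∀ v, e v = v

instance (pat : Fin 6 → ℕ) : Decidable (GoodPat pat) := by
  unfold GoodPat; infer_instance

lemma key {pat : Fin 6 → ℕ} (h : GoodPat pat) (f : Fin 6 → ℕ)
    (hf : ∀ u v, f u = f v → pat u = pat v) :
    IsProperDistinguishing (cycleGraph 6) f := by
  refine ⟨fun u w ha he => h.1 u w ha (hf u w he), fun φ hφ v => ?_⟩
  exact h.2 φ.toEquiv (fun u v ha => φ.map_adj_iff.mpr ha) (fun v => hf _ _ (hφ v)) v

lemma pick_avoid (s t : Finset ℕ) (h : t.card < s.card) : ∃ x ∈ s, x ∉ t := by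
  have h1 : s.card ≤ (s \ t).card + t.card := Finset.card_le_card_sdiff_add_card
  obtain ⟨x, hx⟩ := Finset.card_pos.mp (by omega : 0 < (s \ t).card)
  exact ⟨x, (Finset.mem_sdiff.mp hx).1, (Finset.mem_sdiff.mp hx).2⟩

lemma pick1 (s : Finset ℕ) (h : 2 ≤ s.card) (a : ℕ) : ∃ x ∈ s, x ≠ a := by
  obtain ⟨x, hx, hx'⟩ := pick_avoid s {a} (by simp; omega)
  exact ⟨x, hx, by simpa using hx'⟩

lemma pick2 (s : Finset ℕ) (h : 3 ≤ s.card) (a b : ℕ) : ∃ x ∈ s, x ≠ a ∧ x ≠ b := by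
  have h1 := Finset.card_insert_le a ({b} : Finset ℕ)
  simp only [Finset.card_singleton] at h1
  obtain ⟨x, hx, hx'⟩ := pick_avoid s {a, b} (by omega)
  simp only [Finset.mem_insert, Finset.mem_singleton, not_or] at hx'
  exact ⟨x, hx, hx'⟩

lemma pick3 (s : Finset ℕ) (h : 4 ≤ s.card) (a b c : ℕ) :
    ∃ x ∈ s, x ≠ a ∧ x ≠ b ∧ x ≠ c := by
  have h1 := Finset.card_insert_le a ({b, c} : Finset ℕ)
  have h2 := Finset.card_insert_le b ({c} : Finset ℕ)
  simp only [Finset.card_singleton] at h2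
  obtain ⟨x, hx, hx'⟩ := pick_avoid s {a, b, c} (by omega)
  simp only [Finset.mem_insert, Finset.mem_singleton, not_or] at hx'
  exact ⟨x, hx, hx'⟩

lemma sdiff_two_card (s : Finset ℕ) (hs : s.card = 4) (a b : ℕ) :
    2 ≤ (s \ {a, b}).card := by
  have h1 : s.card ≤ (s \ ({a, b} : Finset ℕ)).card + ({a, b} : Finset ℕ).card :=
    Finset.card_le_card_sdiff_add_card
  have h2 := Finset.card_insert_le a ({b} : Finset ℕ)
  simp only [Finset.card_singleton] at h2
  omega

lemma mem_sdiff_pair {s : Finset ℕ} {x a b : ℕ} (h : x ∈ s \ {a, b}) :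
    x ∈ s ∧ x ≠ a ∧ x ≠ b := by
  obtain ⟨h1, h2⟩ := Finset.mem_sdiff.mp h
  simp only [Finset.mem_insert, Finset.mem_singleton, not_or] at h2
  exact ⟨h1, h2⟩

/-- Three sets of size ≥ 2 with empty triple intersection admit a rainbow triple. -/
lemma H3 {A B C : Finset ℕ} (hA : 2 ≤ A.card) (hB : 2 ≤ B.card) (hC : 2 ≤ C.card)
    (h : ∀ x, x ∈ A → x ∈ B → x ∈ C → False) :
    ∃ a ∈ A, ∃ b ∈ B, ∃ c ∈ C, a ≠ b ∧ a ≠ c ∧ b ≠ c := by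
  obtain ⟨a, haA⟩ := Finset.card_pos.mp (by omega : 0 < A.card)
  by_cases haC : a ∈ C
  · have haB : a ∉ B := fun h' => h a haA h' haC
    obtain ⟨c, hcC, hca⟩ := pick1 C hC a
    obtain ⟨b, hbB, hbc⟩ := pick1 B hB c
    exact ⟨a, haA, b, hbB, c, hcC, fun h' => haB (h' ▸ hbB), fun h' => hca h'.symm, hbc⟩
  · obtain ⟨b, hbB, hba⟩ := pick1 B hB a
    obtain ⟨c, hcC, hcb⟩ := pick1 C hC b
    exact ⟨a, haA, b, hbB, c, hcC, fun h' => hba h'.symm, fun h' => haC (h' ▸ hcC),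
      fun h' => hcb h'.symm⟩

theorem stmt_4_aux (L : Fin 6 → Finset ℕ) (hL : ∀ v, (L v).card = 4) :
    ∃ f : Fin 6 → ℕ, (∀ v, f v ∈ L v) ∧ IsProperDistinguishing (cycleGraph 6) f := by
  by_cases h024 : ∃ a, a ∈ L 0 ∧ a ∈ L 2 ∧ a ∈ L 4
  · obtain ⟨a, ha0, ha2, ha4⟩ := h024
    obtain ⟨b, hb1, hba⟩ := pick1 (L 1) (by rw [hL]; omega) a
    obtain ⟨d, hd3, hda, hdb⟩ := pick2 (L 3) (by rw [hL]; omega) a b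
    obtain ⟨c, hc5, hca, hcb, hcd⟩ := pick3 (L 5) (by rw [hL]) a b d
    refine ⟨vec6 a b a d a c, by intro v; fin_cases v <;> simp [vec6] <;> assumption,
      key (pat := vec6 0 1 0 2 0 3) (by decide) _ ?_⟩
    intro u v; fin_cases u <;> fin_cases v <;> simp [vec6] <;> omega
  by_cases h135 : ∃ a, a ∈ L 1 ∧ a ∈ L 3 ∧ a ∈ L 5
  · obtain ⟨a, ha1, ha3, ha5⟩ := h135
    obtain ⟨b, hb0, hba⟩ := pick1 (L 0) (by rw [hL]; omega) a
    obtain ⟨d, hd2, hda, hdb⟩ := pick2 (L 2) (by rw [hL]; omega) a b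
    obtain ⟨c, hc4, hca, hcb, hcd⟩ := pick3 (L 4) (by rw [hL]) a b d
    refine ⟨vec6 b a d a c a, by intro v; fin_cases v <;> simp [vec6] <;> assumption,
      key (pat := vec6 1 0 2 0 3 0) (by decide) _ ?_⟩
    intro u v; fin_cases u <;> fin_cases v <;> simp [vec6] <;> omega
  have hOdd : ∀ x, x ∈ L 1 → x ∈ L 3 → x ∈ L 5 → False :=
    fun x h1 h3 h5 => h135 ⟨x, h1, h3, h5⟩
  have hEven : ∀ x, x ∈ L 0 → x ∈ L 2 → x ∈ L 4 → False :=
    fun x h0 h2 h4 => h024 ⟨x, h0, h2, h4⟩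
  by_cases hp02 : ∃ a, a ∈ L 0 ∧ a ∈ L 2
  · obtain ⟨a, ha0, ha2⟩ := hp02
    obtain ⟨d, hd4, hda⟩ := pick1 (L 4) (by rw [hL]; omega) a
    obtain ⟨b, hb, c, hc, e, he, hbc, hbe, hce⟩ :=
      H3 (sdiff_two_card (L 1) (hL 1) a d) (sdiff_two_card (L 3) (hL 3) a d)
        (sdiff_two_card (L 5) (hL 5) a d)
        (fun x hx1 hx3 hx5 => hOdd x (Finset.mem_sdiff.mp hx1).1
          (Finset.mem_sdiff.mp hx3).1 (Finset.mem_sdiff.mp hx5).1)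
    obtain ⟨hb1, hba, hbd⟩ := mem_sdiff_pair hb
    obtain ⟨hc3, hca, hcd⟩ := mem_sdiff_pair hc
    obtain ⟨he5, hea, hed⟩ := mem_sdiff_pair he
    refine ⟨vec6 a b a c d e, by intro v; fin_cases v <;> simp [vec6] <;> assumption,
      key (pat := vec6 0 1 0 2 3 4) (by decide) _ ?_⟩
    intro u v; fin_cases u <;> fin_cases v <;> simp [vec6] <;> omega
  by_cases hp24 : ∃ a, a ∈ L 2 ∧ a ∈ L 4
  · obtain ⟨a, ha2, ha4⟩ := hp24
    obtain ⟨d, hd0, hda⟩ := pick1 (L 0) (by rw [hL]; omega) a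
    obtain ⟨b, hb, c, hc, e, he, hbc, hbe, hce⟩ :=
      H3 (sdiff_two_card (L 1) (hL 1) a d) (sdiff_two_card (L 3) (hL 3) a d)
        (sdiff_two_card (L 5) (hL 5) a d)
        (fun x hx1 hx3 hx5 => hOdd x (Finset.mem_sdiff.mp hx1).1
          (Finset.mem_sdiff.mp hx3).1 (Finset.mem_sdiff.mp hx5).1)
    obtain ⟨hb1, hba, hbd⟩ := mem_sdiff_pair hb
    obtain ⟨hc3, hca, hcd⟩ := mem_sdiff_pair hc
    obtain ⟨he5, hea, hed⟩ := mem_sdiff_pair he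
    refine ⟨vec6 d b a c a e, by intro v; fin_cases v <;> simp [vec6] <;> assumption,
      key (pat := vec6 1 2 0 3 0 4) (by decide) _ ?_⟩
    intro u v; fin_cases u <;> fin_cases v <;> simp [vec6] <;> omega
  by_cases hp04 : ∃ a, a ∈ L 0 ∧ a ∈ L 4
  · obtain ⟨a, ha0, ha4⟩ := hp04
    obtain ⟨d, hd2, hda⟩ := pick1 (L 2) (by rw [hL]; omega) a
    obtain ⟨b, hb, c, hc, e, he, hbc, hbe, hce⟩ :=
      H3 (sdiff_two_card (L 1) (hL 1) a d) (sdiff_two_card (L 3) (hL 3) a d)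
        (sdiff_two_card (L 5) (hL 5) a d)
        (fun x hx1 hx3 hx5 => hOdd x (Finset.mem_sdiff.mp hx1).1
          (Finset.mem_sdiff.mp hx3).1 (Finset.mem_sdiff.mp hx5).1)
    obtain ⟨hb1, hba, hbd⟩ := mem_sdiff_pair hb
    obtain ⟨hc3, hca, hcd⟩ := mem_sdiff_pair hc
    obtain ⟨he5, hea, hed⟩ := mem_sdiff_pair he
    refine ⟨vec6 a b d c a e, by intro v; fin_cases v <;> simp [vec6] <;> assumption,
      key (pat := vec6 0 1 2 3 0 4) (by decide) _ ?_⟩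
    intro u v; fin_cases u <;> fin_cases v <;> simp [vec6] <;> omega
  by_cases hp13 : ∃ a, a ∈ L 1 ∧ a ∈ L 3
  · obtain ⟨a, ha1, ha3⟩ := hp13
    obtain ⟨d, hd5, hda⟩ := pick1 (L 5) (by rw [hL]; omega) a
    obtain ⟨b, hb, c, hc, e, he, hbc, hbe, hce⟩ :=
      H3 (sdiff_two_card (L 0) (hL 0) a d) (sdiff_two_card (L 2) (hL 2) a d)
        (sdiff_two_card (L 4) (hL 4) a d)
        (fun x hx0 hx2 hx4 => hEven x (Finset.mem_sdiff.mp hx0).1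
          (Finset.mem_sdiff.mp hx2).1 (Finset.mem_sdiff.mp hx4).1)
    obtain ⟨hb0, hba, hbd⟩ := mem_sdiff_pair hb
    obtain ⟨hc2, hca, hcd⟩ := mem_sdiff_pair hc
    obtain ⟨he4, hea, hed⟩ := mem_sdiff_pair he
    refine ⟨vec6 b a c a e d, by intro v; fin_cases v <;> simp [vec6] <;> assumption,
      key (pat := vec6 1 0 2 0 3 4) (by decide) _ ?_⟩
    intro u v; fin_cases u <;> fin_cases v <;> simp [vec6] <;> omega
  by_cases hp35 : ∃ a, a ∈ L 3 ∧ a ∈ L 5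
  · obtain ⟨a, ha3, ha5⟩ := hp35
    obtain ⟨d, hd1, hda⟩ := pick1 (L 1) (by rw [hL]; omega) a
    obtain ⟨b, hb, c, hc, e, he, hbc, hbe, hce⟩ :=
      H3 (sdiff_two_card (L 0) (hL 0) a d) (sdiff_two_card (L 2) (hL 2) a d)
        (sdiff_two_card (L 4) (hL 4) a d)
        (fun x hx0 hx2 hx4 => hEven x (Finset.mem_sdiff.mp hx0).1
          (Finset.mem_sdiff.mp hx2).1 (Finset.mem_sdiff.mp hx4).1)
    obtain ⟨hb0, hba, hbd⟩ := mem_sdiff_pair hb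
    obtain ⟨hc2, hca, hcd⟩ := mem_sdiff_pair hc
    obtain ⟨he4, hea, hed⟩ := mem_sdiff_pair he
    refine ⟨vec6 b d c a e a, by intro v; fin_cases v <;> simp [vec6] <;> assumption,
      key (pat := vec6 1 2 3 0 4 0) (by decide) _ ?_⟩
    intro u v; fin_cases u <;> fin_cases v <;> simp [vec6] <;> omega
  by_cases hp15 : ∃ a, a ∈ L 1 ∧ a ∈ L 5
  · obtain ⟨a, ha1, ha5⟩ := hp15
    obtain ⟨d, hd3, hda⟩ := pick1 (L 3) (by rw [hL]; omega) a
    obtain ⟨b, hb, c, hc, e, he, hbc, hbe, hce⟩ :=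
      H3 (sdiff_two_card (L 0) (hL 0) a d) (sdiff_two_card (L 2) (hL 2) a d)
        (sdiff_two_card (L 4) (hL 4) a d)
        (fun x hx0 hx2 hx4 => hEven x (Finset.mem_sdiff.mp hx0).1
          (Finset.mem_sdiff.mp hx2).1 (Finset.mem_sdiff.mp hx4).1)
    obtain ⟨hb0, hba, hbd⟩ := mem_sdiff_pair hb
    obtain ⟨hc2, hca, hcd⟩ := mem_sdiff_pair hc
    obtain ⟨he4, hea, hed⟩ := mem_sdiff_pair he
    refine ⟨vec6 b a c d e a, by intro v; fin_cases v <;> simp [vec6] <;> assumption,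
      key (pat := vec6 1 0 2 3 4 0) (by decide) _ ?_⟩
    intro u v; fin_cases u <;> fin_cases v <;> simp [vec6] <;> omega
  -- all distance-2 pairs of lists are disjoint: pick six pairwise distinct colors
  obtain ⟨x0, h00⟩ := Finset.card_pos.mp (by rw [hL]; omega : 0 < (L 0).card)
  obtain ⟨x1, h11, h10⟩ := pick1 (L 1) (by rw [hL]; omega) x0
  obtain ⟨x2, h22, h21⟩ := pick1 (L 2) (by rw [hL]; omega) x1
  have h20 : x2 ≠ x0 := fun h => hp02 ⟨x2, h ▸ h00, h22⟩
  obtain ⟨x3, h33, h30, h32⟩ := pick2 (L 3) (by rw [hL]; omega) x0 x2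
  have h31 : x3 ≠ x1 := fun h => hp13 ⟨x3, h ▸ h11, h33⟩
  obtain ⟨x4, h44, h41, h43⟩ := pick2 (L 4) (by rw [hL]; omega) x1 x3
  have h40 : x4 ≠ x0 := fun h => hp04 ⟨x4, h ▸ h00, h44⟩
  have h42 : x4 ≠ x2 := fun h => hp24 ⟨x4, h ▸ h22, h44⟩
  obtain ⟨x5, h55, h50, h52, h54⟩ := pick3 (L 5) (by rw [hL]) x0 x2 x4
  have h51 : x5 ≠ x1 := fun h => hp15 ⟨x5, h ▸ h11, h55⟩
  have h53 : x5 ≠ x3 := fun h => hp35 ⟨x5, h ▸ h33, h55⟩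
  refine ⟨vec6 x0 x1 x2 x3 x4 x5, by intro v; fin_cases v <;> simp [vec6] <;> assumption,
    key (pat := vec6 0 1 2 3 4 5) (by decide) _ ?_⟩
  intro u v; fin_cases u <;> fin_cases v <;> simp [vec6] <;> omega

theorem stmt_4 (L : Fin 6 → Finset ℕ) (hL : ∀ v, (L v).card = 4)
    (hU : 4 < (Finset.univ.biUnion L).card) :
    ∃ f : Fin 6 → ℕ, (∀ v, f v ∈ L v) ∧ IsProperDistinguishing (cycleGraph 6) f :=
  stmt_4_aux L hL
end

section
/- Fix n ≥ 3. Let L be an assignment of lists of size 3 to the vertices of the odd cycle C_{2n+1} such that the union of all lists has more than 3 colors. Then C_{2n+1} admits a proper distinguishing coloring choosing each vertex's color from its list. -/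
open SimpleGraph

/-! ### Auxiliary lemmas -/

open Fin.CommRing

/-- Adjacency in a large cycle graph: neighbors are successors/predecessors. -/
lemma cycle_adj_iff {n : ℕ} (hn : 3 ≤ n) (u v : Fin (2 * n + 1)) :
    (cycleGraph (2 * n + 1)).Adj u v ↔ v = u + 1 ∨ u = v + 1 := by
  have hone : (1 : Fin (2 * n + 1)).val = 1 := by
    rw [Fin.val_one']; exact Nat.mod_eq_of_lt (by omega)
  rw [cycleGraph_adj']
  constructor
  · rintro (h | h)
    · right
      have h' : u - v = 1 := Fin.ext (by rw [h, hone])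
      rw [sub_eq_iff_eq_add] at h'
      rw [h']; exact add_comm _ _
    · left
      have h' : v - u = 1 := Fin.ext (by rw [h, hone])
      rw [sub_eq_iff_eq_add] at h'
      rw [h']; exact add_comm _ _
  · rintro (h | h)
    · right
      have h' : v - u = 1 := by rw [h]; exact add_sub_cancel_left u 1
      rw [h', hone]
    · left
      have h' : u - v = 1 := by rw [h]; exact add_sub_cancel_left v 1
      rw [h', hone]

/-- Every automorphism of a large odd cycle is a rotation or a reflection. -/
lemma cycle_aut_classify {n : ℕ} (hn : 3 ≤ n)
    (φ : cycleGraph (2 * n + 1) ≃g cycleGraph (2 * n + 1)) :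
    (∀ v, φ v = φ 0 + v) ∨ (∀ v, φ v = φ 0 - v) := by
  have hε1 : φ 1 - φ 0 = 1 ∨ φ 1 - φ 0 = -1 := by
    have h : (cycleGraph (2 * n + 1)).Adj (φ 0) (φ 1) :=
      φ.map_adj_iff.mpr (by rw [cycle_adj_iff hn]; left; rw [zero_add])
    rw [cycle_adj_iff hn] at h
    rcases h with h | h
    · left; rw [h]; exact add_sub_cancel_left _ _
    · right; rw [h]; ring
  set ε : Fin (2 * n + 1) := φ 1 - φ 0 with hε
  have key : ∀ k : ℕ, φ ((k : ℕ) : Fin (2 * n + 1)) = φ 0 + ε * k ∧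
      φ ((k + 1 : ℕ) : Fin (2 * n + 1)) = φ 0 + ε * ((k + 1 : ℕ) : Fin (2 * n + 1)) := by
    intro k
    induction k with
    | zero =>
      refine ⟨by simp, ?_⟩
      push_cast
      rw [hε]
      ring
    | succ k ih =>
      refine ⟨ih.2, ?_⟩
      have hadj : (cycleGraph (2 * n + 1)).Adj (φ ((k + 1 : ℕ) : Fin (2 * n + 1)))
          (φ ((k + 2 : ℕ) : Fin (2 * n + 1))) := by
        apply φ.map_adj_iff.mpr
        rw [cycle_adj_iff hn]
        left; push_cast; ring
      rw [cycle_adj_iff hn] at hadj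
      have h2 : ((k + 2 : ℕ) : Fin (2 * n + 1)) ≠ ((k : ℕ) : Fin (2 * n + 1)) := by
        intro h
        have hv : (k + 2) % (2 * n + 1) = k % (2 * n + 1) := by
          have := congrArg Fin.val h
          rwa [Fin.val_natCast, Fin.val_natCast] at this
        have hdvd : (2 * n + 1) ∣ (k + 2) - k := (Nat.modEq_iff_dvd' (by omega)).mp hv.symm
        have := Nat.le_of_dvd (by omega) hdvd
        omega
      have hne : φ ((k + 2 : ℕ) : Fin (2 * n + 1)) ≠ φ ((k : ℕ) : Fin (2 * n + 1)) :=
        fun h => h2 (φ.toEquiv.injective h)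
      rcases hadj with h | h
      · rcases hε1 with he | he
        · rw [h, ih.2, he]; push_cast; ring
        · exfalso
          apply hne
          rw [h, ih.2, ih.1, he]
          push_cast; ring
      · have h' : φ ((k + 2 : ℕ) : Fin (2 * n + 1)) = φ ((k + 1 : ℕ) : Fin (2 * n + 1)) - 1 := by
          rw [h]; ring
        rcases hε1 with he | he
        · exfalso
          apply hne
          rw [h', ih.2, ih.1, he]
          push_cast; ring
        · rw [h', ih.2, he]; push_cast; ring
  rcases hε1 with he | he
  · left
    intro v
    have := (key v.val).1
    rw [Fin.cast_val_eq_self, he] at this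
    rw [this, one_mul]
  · right
    intro v
    have := (key v.val).1
    rw [Fin.cast_val_eq_self, he] at this
    rw [this]
    ring

/-- Pick an element of `s` avoiding `x` and `y`. -/
noncomputable def pickAvoid (s : Finset ℕ) (x y : ℕ) : ℕ :=
  if h : (s \ {x, y}).Nonempty then (s \ {x, y}).min' h else 0

lemma pickAvoid_spec {s : Finset ℕ} (hs : 3 ≤ s.card) (x y : ℕ) :
    pickAvoid s x y ∈ s ∧ pickAvoid s x y ≠ x ∧ pickAvoid s x y ≠ y := by
  have hcard : ({x, y} : Finset ℕ).card ≤ 2 :=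
    (Finset.card_insert_le _ _).trans (by simp)
  have hle : s.card - ({x, y} : Finset ℕ).card ≤ (s \ {x, y}).card :=
    Finset.le_card_sdiff _ _
  have hne : (s \ {x, y}).Nonempty := Finset.card_pos.mp (by omega)
  have hmem : pickAvoid s x y ∈ s \ {x, y} := by
    rw [pickAvoid, dif_pos hne]; exact Finset.min'_mem _ _
  rw [Finset.mem_sdiff, Finset.mem_insert, Finset.mem_singleton] at hmem
  exact ⟨hmem.1, fun h => hmem.2 (Or.inl h), fun h => hmem.2 (Or.inr h)⟩

/-- The greedy coloring sequence: position `0` gets `c`, every later position gets a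
color of its list avoiding `c` and the previous color. -/
noncomputable def colN (L : ℕ → Finset ℕ) (c : ℕ) : ℕ → ℕ
  | 0 => c
  | k + 1 => pickAvoid (L (k + 1)) c (colN L c k)

lemma colN_spec {L : ℕ → Finset ℕ} (hL : ∀ k, 3 ≤ (L k).card) (c : ℕ) (k : ℕ) :
    colN L c (k + 1) ∈ L (k + 1) ∧ colN L c (k + 1) ≠ c ∧
      colN L c (k + 1) ≠ colN L c k := by
  simpa [colN] using pickAvoid_spec (hL (k + 1)) c (colN L c k)

theorem stmt_5 (n : ℕ) (hn : 3 ≤ n) (L : Fin (2 * n + 1) → Finset ℕ)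
    (hL : ∀ v, (L v).card = 3) (hU : 3 < (Finset.univ.biUnion L).card) :
    ∃ f : Fin (2 * n + 1) → ℕ, (∀ v, f v ∈ L v) ∧
      IsProperDistinguishing (cycleGraph (2 * n + 1)) f := by
  classical
  have hL0 : (L 0).Nonempty := Finset.card_pos.mp (by rw [hL]; omega)
  set c : ℕ := (L 0).min' hL0 with hc
  set L' : ℕ → Finset ℕ := fun k => L ((k : ℕ) : Fin (2 * n + 1)) with hL'
  have hL'3 : ∀ k, 3 ≤ (L' k).card := fun k => (hL _).ge
  set f : Fin (2 * n + 1) → ℕ := fun v => colN L' c v.val with hf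
  have hf0 : f 0 = c := by
    show colN L' c (0 : Fin (2 * n + 1)).val = c
    rw [Fin.val_zero, colN]
  have hfc : ∀ v : Fin (2 * n + 1), f v = c → v = 0 := by
    intro v hv
    by_contra h
    have hval : v.val ≠ 0 := fun h0 => h (Fin.ext h0)
    obtain ⟨k, hk⟩ : ∃ k, v.val = k + 1 := ⟨v.val - 1, by omega⟩
    apply (colN_spec hL'3 c k).2.1
    rw [← hk]
    exact hv
  have hmem : ∀ v, f v ∈ L v := by
    intro v
    have hvv : ((v.val : ℕ) : Fin (2 * n + 1)) = v := Fin.cast_val_eq_self v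
    rcases Nat.eq_zero_or_pos v.val with h | h
    · have h0 : v = 0 := Fin.ext h
      rw [h0, hf0]
      exact Finset.min'_mem _ _
    · obtain ⟨k, hk⟩ : ∃ k, v.val = k + 1 := ⟨v.val - 1, by omega⟩
      have hmem' := (colN_spec hL'3 c k).1
      rw [← hk] at hmem'
      show colN L' c v.val ∈ L v
      have : L' v.val = L v := by
        show L ((v.val : ℕ) : Fin (2 * n + 1)) = L v
        rw [hvv]
      rwa [this] at hmem'
  have hstep : ∀ v : Fin (2 * n + 1), f v ≠ f (v + 1) := by
    intro v
    by_cases h : v = Fin.last (2 * n)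
    · have h1 : v + 1 = 0 := by rw [h]; exact Fin.last_add_one _
      rw [h1, hf0]
      have hval : v.val = 2 * n := by rw [h]; rfl
      show colN L' c v.val ≠ c
      rw [hval]
      obtain ⟨k, hk⟩ : ∃ k, 2 * n = k + 1 := ⟨2 * n - 1, by omega⟩
      rw [hk]
      exact (colN_spec hL'3 c k).2.1
    · have h1 : (v + 1).val = v.val + 1 := by
        rw [Fin.val_add_one, if_neg h]
      show colN L' c v.val ≠ colN L' c (v + 1).val
      rw [h1]
      exact fun hcontra => (colN_spec hL'3 c v.val).2.2 hcontra.symm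
  have hproper : ∀ ⦃u w : Fin (2 * n + 1)⦄, (cycleGraph (2 * n + 1)).Adj u w → f u ≠ f w := by
    intro u w hadj
    rw [cycle_adj_iff hn] at hadj
    rcases hadj with h | h
    · rw [h]; exact hstep u
    · rw [h]; exact (hstep w).symm
  refine ⟨f, hmem, hproper, ?_⟩
  intro φ hφ v
  rcases cycle_aut_classify hn φ with hrot | href
  · have h0 : φ 0 = 0 := hfc _ (by rw [hφ 0, hf0])
    rw [hrot v, h0, zero_add]
  · exfalso
    set a : Fin (2 * n + 1) := φ 0 with ha
    have h2 : (2 : Fin (2 * n + 1)) * ((n : Fin (2 * n + 1)) + 1) = 1 := by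
      have h0 : ((2 * n + 1 : ℕ) : Fin (2 * n + 1)) = 0 := Fin.natCast_self _
      push_cast at h0
      linear_combination h0
    set w : Fin (2 * n + 1) := ((n : Fin (2 * n + 1)) + 1) * (a - 1) with hw
    have hφw : φ w = w + 1 := by
      rw [href w]
      have hww : w + w = a - 1 := by
        rw [hw]
        linear_combination (a - 1) * h2
      linear_combination -hww
    exact hstep w ((hφ w).symm.trans (by rw [hφw]))
end

section
/- Fix n ≥ 4. Let L be an assignment of lists of size 3 to the vertices of the even cycle C_{2n} such that the union of all lists has more than 3 colors. Then C_{2n} admits a proper distinguishing coloring choosing each vertex's color from its list. -/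
open SimpleGraph

open Finset
open scoped Fin.CommRing



/-- deterministic choice from a finset -/
def pickc (s : Finset ℕ) : ℕ := if h : s.Nonempty then s.min' h else 0

lemma pickc_mem {s : Finset ℕ} (h : s.Nonempty) : pickc s ∈ s := by
  rw [pickc, dif_pos h]; exact s.min'_mem h

lemma sdiff_pair_nonempty {s : Finset ℕ} (hs : s.card = 3) (a b : ℕ) :
    (s \ {a, b}).Nonempty := by
  have h1 : ({a, b} : Finset ℕ).card ≤ 2 := card_insert_le _ _ |>.trans (by simp)
  have h2 := le_card_sdiff ({a, b} : Finset ℕ) s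
  rw [← Finset.card_pos]; omega

/-- the coloring sequence along the cycle, defined by downward recursion -/
def gseq (m j c : ℕ) (M : ℕ → Finset ℕ) (k : ℕ) : ℕ :=
  if _h1 : k = 0 then c
  else if h2 : k + 1 < m then
    if h3 : k = j ∧ 2 * j < m then
      pickc (M j \ {gseq m j c M (k + 1), gseq m j c M (m - j)})
    else pickc (M k \ {c, gseq m j c M (k + 1)})
  else pickc (M (m - 1) \ {c})
termination_by m - k
decreasing_by all_goals omega

lemma gseq_zero (m j c : ℕ) (M : ℕ → Finset ℕ) : gseq m j c M 0 = c := by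
  rw [gseq]; simp

lemma gseq_spec (m j c : ℕ) (M : ℕ → Finset ℕ) (hM : ∀ k, (M k).card = 3)
    (hj1 : 1 ≤ j) (hj2 : 2 * j < m) (hcj : c ∉ M j)
    (k : ℕ) (h1 : 1 ≤ k) (h2 : k < m) :
    gseq m j c M k ∈ M k ∧ gseq m j c M k ≠ c ∧
      (k + 1 < m → gseq m j c M k ≠ gseq m j c M (k + 1)) ∧
      (k = j → gseq m j c M k ≠ gseq m j c M (m - j)) := by
  rw [gseq]
  rw [dif_neg (by omega)]
  by_cases hk2 : k + 1 < m
  · rw [dif_pos hk2]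
    by_cases hk3 : k = j ∧ 2 * j < m
    · rw [dif_pos hk3]
      have hne := sdiff_pair_nonempty (hM j) (gseq m j c M (k + 1)) (gseq m j c M (m - j))
      have hmem := pickc_mem hne
      rw [Finset.mem_sdiff, Finset.mem_insert, Finset.mem_singleton] at hmem
      obtain ⟨hmem, hnot⟩ := hmem
      push_neg at hnot
      obtain ⟨rfl, -⟩ := hk3
      exact ⟨hmem, fun hc => hcj (hc ▸ hmem), fun _ => hnot.1, fun _ => hnot.2⟩
    · rw [dif_neg hk3]
      have hkj : k ≠ j := fun h => hk3 ⟨h, hj2⟩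
      have hne := sdiff_pair_nonempty (hM k) c (gseq m j c M (k + 1))
      have hmem := pickc_mem hne
      rw [Finset.mem_sdiff, Finset.mem_insert, Finset.mem_singleton] at hmem
      obtain ⟨hmem, hnot⟩ := hmem
      push_neg at hnot
      exact ⟨hmem, hnot.1, fun _ => hnot.2, fun h => absurd h hkj⟩
  · rw [dif_neg hk2]
    have hkm : k = m - 1 := by omega
    have hne := sdiff_pair_nonempty (hM (m - 1)) c c
    have hmem := pickc_mem (by simpa using hne)
    rw [Finset.mem_sdiff, Finset.mem_singleton] at hmem
    refine ⟨hkm ▸ hmem.1, hmem.2, fun h => absurd h hk2, fun h => by omega⟩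


lemma cyc_adj_iff {m : ℕ} [NeZero m] (hm : 2 ≤ m) {a b : Fin m} :
    (cycleGraph m).Adj a b ↔ b = a + 1 ∨ a = b + 1 := by
  rw [cycleGraph_adj']
  have h1 : ((1 : Fin m)).val = 1 := by
    simp [Fin.val_one', Nat.mod_eq_of_lt hm]
  constructor
  · rintro (h | h)
    · right; have : a - b = 1 := Fin.ext (by rw [h, h1])
      rw [← this]; ring
    · left; have : b - a = 1 := Fin.ext (by rw [h, h1])
      rw [← this]; ring
  · rintro (rfl | rfl)
    · right; rw [show a + 1 - a = 1 from by ring]; exact h1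
    · left; rw [show b + 1 - b = 1 from by ring]; exact h1

lemma rigid {m : ℕ} [NeZero m] (hm : 3 ≤ m) (φ : cycleGraph m ≃g cycleGraph m)
    (v d : Fin m) (hd : d = 1 ∨ d = -1) (h0 : φ v = v) (h1 : φ (v + 1) = v + d) :
    ∀ k : ℕ, φ (v + (k : Fin m)) = v + d * (k : Fin m) := by
  have two_ne : ((2 : ℕ) : Fin m) ≠ 0 := by
    intro h
    rw [Fin.ext_iff, Fin.val_cast_of_lt (by omega)] at h
    simp at h
  suffices H : ∀ k : ℕ, φ (v + (k : Fin m)) = v + d * (k : Fin m) ∧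
      φ (v + ((k + 1 : ℕ) : Fin m)) = v + d * ((k + 1 : ℕ) : Fin m) from fun k => (H k).1
  intro k
  induction k with
  | zero => simpa using ⟨h0, h1⟩
  | succ k ih =>
    refine ⟨ih.2, ?_⟩
    have hadj : (cycleGraph m).Adj (v + ((k + 1 : ℕ) : Fin m)) (v + ((k + 1 + 1 : ℕ) : Fin m)) := by
      rw [cyc_adj_iff (by omega)]
      left; push_cast; ring
    have hadj2 := φ.map_adj_iff.mpr hadj
    rw [ih.2, cyc_adj_iff (by omega)] at hadj2
    have hne : φ (v + ((k + 1 + 1 : ℕ) : Fin m)) ≠ v + d * ((k : ℕ) : Fin m) := by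
      rw [← ih.1]
      intro h
      have h2 := φ.injective h
      have h4 := add_left_cancel h2
      push_cast at h4
      exact two_ne (by push_cast; linear_combination h4)
    rcases hd with rfl | rfl
    · rcases hadj2 with h | h
      · rw [h]; push_cast; ring
      · exfalso; apply hne; rw [eq_sub_of_add_eq h.symm]; push_cast; ring
    · rcases hadj2 with h | h
      · exfalso; apply hne; rw [h]; push_cast; ring
      · rw [eq_sub_of_add_eq h.symm]; push_cast; ring

lemma neg_cast {m : ℕ} [NeZero m] {j : ℕ} (hj : j ≤ m) :
    ((m - j : ℕ) : Fin m) = -(j : Fin m) := by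
  have h : ((m : ℕ) : Fin m) = 0 := by simp
  rw [Nat.cast_sub hj, h]; ring

lemma val_neg_cast {m : ℕ} [NeZero m] {j : ℕ} (hj1 : 1 ≤ j) (hj2 : j < m) :
    (-(j : Fin m)).val = m - j := by
  rw [← neg_cast hj2.le, Fin.val_cast_of_lt (by omega)]

theorem stmt_6 (n : ℕ) (hn : 4 ≤ n) (L : Fin (2 * n) → Finset ℕ)
    (hL : ∀ v, (L v).card = 3) (hU : 3 < (Finset.univ.biUnion L).card) :
    ∃ f : Fin (2 * n) → ℕ, (∀ v, f v ∈ L v) ∧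
      IsProperDistinguishing (cycleGraph (2 * n)) f := by
  haveI : NeZero (2 * n) := ⟨by omega⟩
  have hone : ((1 : Fin (2 * n))).val = 1 := by
    have : ((1 : ℕ) : Fin (2 * n)).val = 1 := Fin.val_cast_of_lt (by omega)
    simpa using this
  -- Step 1: find v0, u, c
  obtain ⟨v0, u, c, hcv0, hcu, hd0, hdn⟩ : ∃ (v0 u : Fin (2 * n)) (c : ℕ),
      c ∈ L v0 ∧ c ∉ L u ∧ (u - v0).val ≠ 0 ∧ (u - v0).val ≠ n := by
    have hw0 : ¬(Finset.univ.biUnion L ⊆ L 0) := fun hsub => by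
      have := Finset.card_le_card hsub; rw [hL 0] at this; omega
    obtain ⟨c, hcU, hc0⟩ := Finset.not_subset.mp hw0
    obtain ⟨v, -, hcv⟩ := Finset.mem_biUnion.mp hcU
    by_cases hA : ((0 : Fin (2 * n)) - v).val = n
    · have hxx : (0 : Fin (2 * n)) - v = ((n : ℕ) : Fin (2 * n)) :=
        Fin.ext (by rw [hA, Fin.val_cast_of_lt (by omega)])
      by_cases hB : c ∈ L (v + 1)
      · refine ⟨v + 1, 0, c, hB, hc0, ?_, ?_⟩ <;>
        · have h2 : (0 : Fin (2 * n)) - (v + 1) = ((n - 1 : ℕ) : Fin (2 * n)) := by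
            rw [Nat.cast_sub (by omega : 1 ≤ n), ← hxx]; push_cast; ring
          rw [h2, Fin.val_cast_of_lt (by omega)]; omega
      · refine ⟨v, v + 1, c, hcv, hB, ?_, ?_⟩ <;>
        · rw [show v + 1 - v = 1 from by ring, hone]; omega
    · refine ⟨v, 0, c, hcv, hc0, fun h => ?_, hA⟩
      have h2 : (0 : Fin (2 * n)) - v = 0 := Fin.ext (by rw [h, Fin.val_zero])
      have h3 : (0 : Fin (2 * n)) = v := sub_eq_zero.mp h2
      exact hc0 (h3 ▸ hcv)
  -- Step 2: orientation and offset
  obtain ⟨ε, j, hε, hj1, hj2, hu⟩ : ∃ (ε : Fin (2 * n)) (j : ℕ),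
      (ε = 1 ∨ ε = -1) ∧ 1 ≤ j ∧ 2 * j < 2 * n ∧ v0 + ε * (j : Fin (2 * n)) = u := by
    have htlt : (u - v0).val < 2 * n := Fin.is_lt _
    by_cases hts : 2 * (u - v0).val < 2 * n
    · exact ⟨1, (u - v0).val, Or.inl rfl, by omega, hts, by
        rw [Fin.cast_val_eq_self]; ring⟩
    · refine ⟨-1, 2 * n - (u - v0).val, Or.inr rfl, by omega, by omega, ?_⟩
      rw [neg_cast (by omega), Fin.cast_val_eq_self]; ring
  have hε2 : ε * ε = 1 := by rcases hε with rfl | rfl <;> ring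
  -- Step 3: the coloring
  set M : ℕ → Finset ℕ := fun k => L (v0 + ε * (k : Fin (2 * n))) with hMdef
  have hM : ∀ k, (M k).card = 3 := fun k => hL _
  have hcjM : c ∉ M j := by rw [hMdef]; simpa [hu] using hcu
  have spec := gseq_spec (2 * n) j c M hM hj1 hj2 hcjM
  set g : ℕ → ℕ := gseq (2 * n) j c M with hgdef
  set f : Fin (2 * n) → ℕ := fun w => g ((ε * (w - v0)).val) with hfdef
  have hidx_inv : ∀ w : Fin (2 * n), v0 + ε * (((ε * (w - v0)).val : ℕ) : Fin (2 * n)) = w := by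
    intro w; rw [Fin.cast_val_eq_self]
    have : ε * (ε * (w - v0)) = w - v0 := by rw [← mul_assoc, hε2, one_mul]
    rw [this]; ring
  have hzero : ∀ w : Fin (2 * n), (ε * (w - v0)).val = 0 ↔ w = v0 := by
    intro w
    constructor
    · intro h
      have h0 : ε * (w - v0) = 0 := Fin.ext (by rw [h, Fin.val_zero])
      rcases hε with rfl | rfl
      · have hx : w - v0 = 0 := by simpa using h0
        exact sub_eq_zero.mp hx
      · have hx : v0 - w = 0 := by simpa using h0
        exact (sub_eq_zero.mp hx).symm
    · rintro rfl; simp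
  have hg0 : g 0 = c := by rw [hgdef]; exact gseq_zero _ _ _ _
  have hfv0 : f v0 = c := by
    simp only [hfdef]
    rw [show (ε * (v0 - v0)).val = 0 from (hzero v0).mpr rfl, hg0]
  have hfc : ∀ w, f w = c ↔ w = v0 := by
    intro w
    constructor
    · intro hh
      by_contra hne
      have hk : (ε * (w - v0)).val ≠ 0 := fun h0 => hne ((hzero w).mp h0)
      have h1 := (spec ((ε * (w - v0)).val) (Nat.one_le_iff_ne_zero.mpr hk) (Fin.is_lt _)).2.1
      exact h1 (by simpa only [hfdef] using hh)
    · rintro rfl; exact hfv0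
  have hfmem : ∀ w, f w ∈ L w := by
    intro w
    by_cases h : w = v0
    · rw [h, hfv0]; exact hcv0
    · have hk : (ε * (w - v0)).val ≠ 0 := fun h0 => h ((hzero w).mp h0)
      have hmem := (spec ((ε * (w - v0)).val) (Nat.one_le_iff_ne_zero.mpr hk) (Fin.is_lt _)).1
      simp only [hMdef] at hmem
      rw [hidx_inv w] at hmem
      simpa only [hfdef] using hmem
  -- properness key
  have key2 : ∀ p q : Fin (2 * n), q = p + 1 → g p.val ≠ g q.val := by
    intro p q hq
    have hqv : q.val = (p.val + 1) % (2 * n) := by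
      rw [hq, Fin.val_add, hone]
    by_cases hp : p.val + 1 < 2 * n
    · rw [Nat.mod_eq_of_lt hp] at hqv
      by_cases hp0 : p.val = 0
      · rw [hp0, hg0]
        intro hh
        exact (spec q.val (by omega) (by omega)).2.1 hh.symm
      · rw [hqv]
        exact (spec p.val (by omega) (Fin.is_lt _)).2.2.1 hp
    · have hpv : p.val + 1 = 2 * n := by have := Fin.is_lt p; omega
      have hq0 : q.val = 0 := by rw [hqv, hpv, Nat.mod_self]
      rw [hq0, hg0]
      exact (spec p.val (by omega) (Fin.is_lt _)).2.1
  have hproper : ∀ ⦃a b : Fin (2 * n)⦄, (cycleGraph (2 * n)).Adj a b → f a ≠ f b := by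
    have key3 : ∀ a b : Fin (2 * n), b = a + 1 → f a ≠ f b := by
      intro a b hb
      have hrel : ε * (b - v0) = ε * (a - v0) + ε := by rw [hb]; ring
      rcases hε with rfl | rfl
      · exact key2 _ _ (by rw [hrel])
      · exact fun hh => key2 _ _ (by rw [hrel]; ring) hh.symm
    intro a b hab
    rw [cyc_adj_iff (by omega)] at hab
    rcases hab with h | h
    · exact key3 a b h
    · exact fun hh => key3 b a h hh.symm
  refine ⟨f, hfmem, hproper, ?_⟩
  -- distinguishing
  intro φ hφ v
  have hv0 : φ v0 = v0 := (hfc (φ v0)).mp (by rw [hφ v0]; exact (hfc v0).mpr rfl)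
  have hadj1 : (cycleGraph (2 * n)).Adj v0 (v0 + 1) :=
    (cyc_adj_iff (by omega)).mpr (Or.inl rfl)
  have hadj2 := φ.map_adj_iff.mpr hadj1
  rw [hv0, cyc_adj_iff (by omega)] at hadj2
  obtain ⟨d, hd, hstep⟩ : ∃ d : Fin (2 * n), (d = 1 ∨ d = -1) ∧ φ (v0 + 1) = v0 + d := by
    rcases hadj2 with h | h
    · exact ⟨1, Or.inl rfl, h⟩
    · exact ⟨-1, Or.inr rfl, by rw [eq_sub_of_add_eq h.symm]; ring⟩
  have hrig := rigid (by omega) φ v0 d hd hv0 hstep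
  have hall : ∀ w : Fin (2 * n), φ w = v0 + d * (w - v0) := by
    intro w
    have h := hrig ((w - v0).val)
    rw [Fin.cast_val_eq_self] at h
    rwa [show v0 + (w - v0) = w from by ring] at h
  rcases hd with rfl | rfl
  · rw [hall v]; ring
  · exfalso
    set wj := v0 + ε * ((j : ℕ) : Fin (2 * n)) with hwj
    have h2 : wj - v0 = ε * ((j : ℕ) : Fin (2 * n)) := by rw [hwj]; ring
    have hfwj : f wj = g j := by
      simp only [hfdef]
      have h1 : ε * (wj - v0) = ((j : ℕ) : Fin (2 * n)) := by
        rw [h2, ← mul_assoc, hε2, one_mul]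
      rw [h1, Fin.val_cast_of_lt (by omega)]
    have hfwj2 : f (φ wj) = g (2 * n - j) := by
      simp only [hfdef]
      have h1 : ε * (φ wj - v0) = -((j : ℕ) : Fin (2 * n)) := by
        rw [hall wj, h2]
        rw [show ε * (v0 + -1 * (ε * ((j : ℕ) : Fin (2 * n))) - v0) = -(ε * ε * ((j : ℕ) : Fin (2 * n))) from by ring]
        rw [hε2, one_mul]
      rw [h1, val_neg_cast hj1 (by omega)]
    have := hφ wj
    rw [hfwj, hfwj2] at this
    exact (spec j hj1 (by omega)).2.2.2 rfl this.symm
end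

section
/- For every m ≥ 3, the list-distinguishing chromatic number of the odd cycle C_{2m+1} equals 3, and for every n ≥ 4, the list-distinguishing chromatic number of the even cycle C_{2n} equals 3. -/
open SimpleGraph
open Fin.NatCast Fin.CommRing
theorem fin_cast_inj {n a b : ℕ} [NeZero n] (ha : a < n) (hb : b < n) (h : (a : Fin n) = b) : a = b := by
  have := congrArg Fin.val h
  rwa [Fin.val_natCast, Fin.val_natCast, Nat.mod_eq_of_lt ha, Nat.mod_eq_of_lt hb] at this

theorem fin_val_cast {n a : ℕ} [NeZero n] (ha : a < n) : ((a : Fin n)).val = a := by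
  rw [Fin.val_natCast, Nat.mod_eq_of_lt ha]

theorem fin_cast_self_eq_zero {n : ℕ} [NeZero n] : ((n : Fin n)) = 0 := by
  have : ((n : Fin n)).val = 0 := by rw [Fin.val_natCast, Nat.mod_self]
  exact Fin.ext this

theorem fin_cast_ne {n a b : ℕ} [NeZero n] (hab : a < b) (hb : b - a < n) : (a : Fin n) ≠ b := by
  intro h
  have hv := congrArg Fin.val h
  rw [Fin.val_natCast, Fin.val_natCast] at hv
  have hmod : a ≡ b [MOD n] := hv
  have hdvd : n ∣ b - a := (Nat.modEq_iff_dvd' (le_of_lt hab)).mp hmod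
  have := Nat.le_of_dvd (by omega) hdvd
  omega

theorem fin_neg_cast {n j : ℕ} [NeZero n] (h1 : j ≤ n) : -((j : ℕ) : Fin n) = ((n - j : ℕ) : Fin n) := by
  have h : ((n - j : ℕ) : Fin n) + ((j : ℕ) : Fin n) = 0 := by
    rw [← Nat.cast_add, show n - j + j = n by omega, fin_cast_self_eq_zero]
  exact (neg_eq_of_add_eq_zero_left h)

theorem fin_cast_sub {n d i : ℕ} [NeZero n] (h : i ≤ d) :
    ((d : ℕ) : Fin n) - ((i : ℕ) : Fin n) = ((d - i : ℕ) : Fin n) := by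
  have h2 : ((d - i : ℕ) : Fin n) + (i : Fin n) = (d : Fin n) := by
    rw [← Nat.cast_add, show d - i + i = d by omega]
  exact (eq_sub_of_add_eq h2).symm

/-- adjacency characterization -/
theorem cyc_adj_iff_s7 {k : ℕ} {u v : Fin (k+2)} :
    (cycleGraph (k+2)).Adj u v ↔ v = u + 1 ∨ u = v + 1 := by
  rw [cycleGraph_adj]
  constructor
  · rintro (h | h)
    · right; rw [sub_eq_iff_eq_add] at h; exact h.trans (add_comm 1 v)
    · left; rw [sub_eq_iff_eq_add] at h; exact h.trans (add_comm 1 u)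
  · rintro (h | h)
    · right; rw [h]; ring
    · left; rw [h]; ring

theorem cyc_adj_succ {k : ℕ} (v : Fin (k+2)) : (cycleGraph (k+2)).Adj v (v+1) :=
  cyc_adj_iff_s7.mpr (Or.inl rfl)

/-- every graph automorphism of the cycle is a rotation or a reflection -/
theorem aut_formula {k : ℕ} (hk : 1 ≤ k) (φ : cycleGraph (k+2) ≃g cycleGraph (k+2)) (x : Fin (k+2)) :
    ∃ e : Fin (k+2), (e = 1 ∨ e = -1) ∧
      ∀ j : ℕ, φ (x + (j : Fin (k+2))) = φ x + e * (j : Fin (k+2)) := by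
  have hn : True := trivial
  have two_ne : ∀ a : ℕ, (x + ((a + 2 : ℕ) : Fin (k+2))) ≠ (x + (a : Fin (k+2))) := by
    intro a h
    have h2 : ((a + 2 : ℕ) : Fin (k+2)) = (a : Fin (k+2)) := by
      exact add_left_cancel h
    have hne : ((a : ℕ) : Fin (k+2)) ≠ ((a + 2 : ℕ) : Fin (k+2)) :=
      fin_cast_ne (show a < a + 2 by omega) (show a + 2 - a < k + 2 by omega)
    exact hne h2.symm
  have hadj1 : (cycleGraph (k+2)).Adj x (x + 1) := cyc_adj_succ x
  have hadj1' := (φ.map_adj_iff).mpr hadj1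
  have hstart : φ (x + 1) = φ x + 1 ∨ φ (x + 1) = φ x + (-1) := by
    rcases cyc_adj_iff_s7.mp hadj1' with h | h
    · left; exact h
    · right; rw [h]; ring
  obtain ⟨e, he, hbase⟩ : ∃ e : Fin (k+2), (e = 1 ∨ e = -1) ∧ φ (x + 1) = φ x + e := by
    rcases hstart with h | h
    · exact ⟨1, Or.inl rfl, h⟩
    · exact ⟨-1, Or.inr rfl, h⟩
  refine ⟨e, he, ?_⟩
  have key : ∀ j : ℕ, φ (x + (j : Fin (k+2))) = φ x + e * (j : Fin (k+2)) ∧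
      φ (x + ((j+1 : ℕ) : Fin (k+2))) = φ x + e * ((j+1 : ℕ) : Fin (k+2)) := by
    intro j
    induction j with
    | zero =>
      constructor
      · simp
      · push_cast
        rw [mul_one]
        simpa using hbase
    | succ j ih =>
      refine ⟨ih.2, ?_⟩
      have hA : (cycleGraph (k+2)).Adj (x + ((j+1 : ℕ) : Fin (k+2))) (x + ((j+2 : ℕ) : Fin (k+2))) := by
        have hrw : (x + ((j+2 : ℕ) : Fin (k+2))) = (x + ((j+1 : ℕ) : Fin (k+2))) + 1 := by
          push_cast; ring
        rw [hrw]; exact cyc_adj_succ _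
      have hB := (φ.map_adj_iff).mpr hA
      have hne : φ (x + ((j+2 : ℕ) : Fin (k+2))) ≠ φ (x + (j : Fin (k+2))) := by
        intro h
        exact two_ne j (φ.injective h)
      rcases cyc_adj_iff_s7.mp hB with h | h
      · -- φ (x + (j+2)) = φ (x + (j+1)) + 1
        rw [ih.2] at h
        rcases he with he1 | he1
        · rw [h, he1]; push_cast; ring
        · exfalso
          apply hne
          rw [h, ih.1, he1]; push_cast; ring
      · -- φ (x + (j+1)) = φ (x + (j+2)) + 1
        rw [ih.2] at h
        have h' : φ (x + ((j+2 : ℕ) : Fin (k+2))) = φ x + e * ((j+1 : ℕ) : Fin (k+2)) - 1 :=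
          (eq_sub_of_add_eq h.symm)
        rcases he with he1 | he1
        · exfalso
          apply hne
          rw [h', ih.1, he1]; push_cast; ring
        · rw [h', he1]; push_cast; ring
  exact fun j => (key j).1

/-- if an automorphism fixes 0 with rotation branch, it is the identity -/
theorem aut_id {k : ℕ} (φ : cycleGraph (k+2) ≃g cycleGraph (k+2))
    (h0 : φ 0 = 0)
    (hform : ∀ j : ℕ, φ (0 + (j : Fin (k+2))) = φ 0 + 1 * (j : Fin (k+2))) :
    ∀ v, φ v = v := by
  intro v
  have := hform v.val
  rw [h0, Fin.cast_val_eq_self] at this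
  simpa using this

noncomputable def pick3_s7 (s : Finset ℕ) (a b : ℕ) : ℕ :=
  if h : (s \ {a, b}).Nonempty then h.choose else 0

theorem pick3_spec {s : Finset ℕ} (hs : 3 ≤ s.card) (a b : ℕ) :
    pick3_s7 s a b ∈ s ∧ pick3_s7 s a b ≠ a ∧ pick3_s7 s a b ≠ b := by
  have hne : (s \ {a, b}).Nonempty := by
    rw [Finset.sdiff_nonempty]
    intro hsub
    have h1 := Finset.card_le_card hsub
    have h2 : ({a, b} : Finset ℕ).card ≤ 2 := by
      have := Finset.card_insert_le a ({b} : Finset ℕ)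
      simpa using this
    omega
  rw [pick3_s7, dif_pos hne]
  have hmem := hne.choose_spec
  rw [Finset.mem_sdiff, Finset.mem_insert, Finset.mem_singleton] at hmem
  exact ⟨hmem.1, fun h => hmem.2 (Or.inl h), fun h => hmem.2 (Or.inr h)⟩

noncomputable def gr (L : ℕ → Finset ℕ) (c sp w : ℕ) (useC : Bool) : ℕ → ℕ
  | 0 => c
  | j+1 => if j+1 = sp then (if useC then c else pick3_s7 (L (j+1)) (gr L c sp w useC j) w)
           else pick3_s7 (L (j+1)) (gr L c sp w useC j) c

theorem gr_zero (L : ℕ → Finset ℕ) (c sp w : ℕ) (useC : Bool) : gr L c sp w useC 0 = c := rfl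

theorem gr_succ_nonsp (L : ℕ → Finset ℕ) (c sp w : ℕ) (useC : Bool) {j : ℕ} (h : j + 1 ≠ sp) :
    gr L c sp w useC (j+1) = pick3_s7 (L (j+1)) (gr L c sp w useC j) c := by
  rw [gr, if_neg h]

theorem gr_succ_sp_true (L : ℕ → Finset ℕ) (c sp w : ℕ) {j : ℕ} (h : j + 1 = sp) :
    gr L c sp w true (j+1) = c := by
  rw [gr, if_pos h]; rfl

theorem gr_succ_sp_false (L : ℕ → Finset ℕ) (c sp w : ℕ) {j : ℕ} (h : j + 1 = sp) :
    gr L c sp w false (j+1) = pick3_s7 (L (j+1)) (gr L c sp w false j) w := by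
  rw [gr, if_pos h]; rfl

theorem gr_indep (L : ℕ → Finset ℕ) (c sp : ℕ) (useC : Bool) (w w' : ℕ) :
    ∀ j, j < sp → gr L c sp w useC j = gr L c sp w' useC j := by
  intro j
  induction j with
  | zero => intro _; rfl
  | succ j ih =>
    intro hj
    have hne : j + 1 ≠ sp := by omega
    rw [gr_succ_nonsp _ _ _ _ _ hne, gr_succ_nonsp _ _ _ _ _ hne, ih (by omega)]
theorem gr_sp_true' (L : ℕ → Finset ℕ) (c sp w : ℕ) (h : 1 ≤ sp) :
    gr L c sp w true sp = c := by
  obtain ⟨j, rfl⟩ : ∃ j, sp = j + 1 := ⟨sp - 1, by omega⟩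
  exact gr_succ_sp_true L c (j+1) w rfl

theorem gr_sp_false' (L : ℕ → Finset ℕ) (c sp w : ℕ) (h : 1 ≤ sp) :
    gr L c sp w false sp = pick3_s7 (L sp) (gr L c sp w false (sp - 1)) w := by
  obtain ⟨j, rfl⟩ : ∃ j, sp = j + 1 := ⟨sp - 1, by omega⟩
  rw [gr_succ_sp_false L c (j+1) w rfl]
  congr 2

theorem proper_of {k : ℕ} (g : ℕ → ℕ)
    (h1 : ∀ j, j + 1 ≤ k + 1 → g (j+1) ≠ g j)
    (h2 : g (k+1) ≠ g 0) :
    ∀ ⦃u v : Fin (k+2)⦄, (cycleGraph (k+2)).Adj u v → g u.val ≠ g v.val := by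
  have main : ∀ u v : Fin (k+2), v = u + 1 → g v.val ≠ g u.val := by
    intro u v hv
    subst hv
    by_cases hu : u = Fin.last (k+1)
    · have : (u + 1).val = 0 := by rw [Fin.val_add_one, if_pos hu]
      rw [this, hu]
      exact fun h => h2 h.symm
    · have : (u + 1).val = u.val + 1 := by rw [Fin.val_add_one, if_neg hu]
      rw [this]
      have hlt : u.val + 1 ≤ k + 1 := by
        have := u.isLt
        have hne : u.val ≠ k + 1 := fun h => hu (Fin.ext (by simpa using h))
        omega
      exact h1 u.val hlt
  intro u v hadj
  rcases cyc_adj_iff_s7.mp hadj with h | h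
  · exact (main u v h).symm
  · exact main v u h

theorem mem_of {k : ℕ} (L : Fin (k+2) → Finset ℕ) (g : ℕ → ℕ)
    (h : ∀ a, a < k+2 → g a ∈ L ((a : ℕ) : Fin (k+2))) : ∀ v, g v.val ∈ L v := by
  intro v
  have := h v.val v.isLt
  rwa [Fin.cast_val_eq_self] at this

theorem refl_point {k : ℕ} (φ : cycleGraph (k+2) ≃g cycleGraph (k+2))
    (x0 : φ 0 = 0)
    (hform : ∀ j : ℕ, φ (0 + (j : Fin (k+2))) = φ 0 + (-1) * (j : Fin (k+2)))
    (a : ℕ) (ha : a ≤ k+2) :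
    φ ((a : ℕ) : Fin (k+2)) = ((k + 2 - a : ℕ) : Fin (k+2)) := by
  have h := hform a
  rw [x0, zero_add, zero_add, neg_one_mul, fin_neg_cast ha] at h
  exact h

/-- The main upper bound: every 3-list-assignment on `C_n`, `n ≥ 7`, has a proper
distinguishing coloring. -/
theorem mem3 {k : ℕ} (hk : 5 ≤ k) : ProperlyListDistinguishable (cycleGraph (k+2)) 3 := by
  intro L hL
  have hL3 : ∀ v, 3 ≤ (L v).card := fun v => le_of_eq (hL v).symm
  set Ln : ℕ → Finset ℕ := fun j => L ((j : ℕ) : Fin (k+2)) with hLn_def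
  have hLn : ∀ j, 3 ≤ (Ln j).card := fun j => hL3 _
  have hc0 : (L 0).Nonempty := Finset.card_pos.mp (by rw [hL 0]; omega)
  rcases Nat.even_or_odd (k+2) with heven | hodd
  · -- EVEN CASE, k+2 = 2*N, N ≥ 4
    obtain ⟨N, hN⟩ := heven
    have hN4 : 4 ≤ N := by omega
    obtain ⟨j₀, hj1, hjlb, hjub⟩ : ∃ j₀, j₀ % 2 = 1 ∧ N + 1 ≤ j₀ ∧ j₀ ≤ 2*N - 3 := by
      rcases Nat.even_or_odd N with h | h
      · obtain ⟨r, hr⟩ := h; exact ⟨N+1, by omega, by omega, by omega⟩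
      · obtain ⟨r, hr⟩ := h; exact ⟨N+2, by omega, by omega, by omega⟩
    have hjle : j₀ ≤ k - 1 := by omega
    by_cases hcap : (L 0 ∩ L ((j₀ : ℕ) : Fin (k+2))).Nonempty
    · -- E1 : common color at odd distance j₀, used exactly twice
      obtain ⟨c, hc⟩ := hcap
      rw [Finset.mem_inter] at hc
      set g : ℕ → ℕ := gr Ln c j₀ 0 true with hg_def
      have g0 : g 0 = c := rfl
      have hstep : ∀ j, j + 1 ≠ j₀ →
          (g (j+1) ∈ Ln (j+1) ∧ g (j+1) ≠ g j ∧ g (j+1) ≠ c) := by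
        intro j hj
        rw [hg_def, gr_succ_nonsp _ _ _ _ _ hj]
        exact pick3_spec (hLn _) _ _
      have hgj₀ : g j₀ = c := by
        rw [hg_def]; exact gr_sp_true' Ln c j₀ 0 (by omega)
      have huniq : ∀ a, a < k + 2 → g a = c → a = 0 ∨ a = j₀ := by
        intro a ha hac
        cases a with
        | zero => exact Or.inl rfl
        | succ j =>
          by_cases hj : j + 1 = j₀
          · exact Or.inr hj
          · exact absurd hac (hstep j hj).2.2
      refine ⟨fun v => g v.val, ?_, ?_, ?_⟩
      · -- membership
        apply mem_of
        intro a ha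
        cases a with
        | zero => exact hc.1
        | succ j =>
          by_cases hj : j + 1 = j₀
          · rw [hj, hgj₀]; exact hc.2
          · exact (hstep j hj).1
      · -- proper
        apply proper_of
        · intro j hj
          by_cases hjj : j + 1 = j₀
          · subst hjj
            obtain ⟨j₂, rfl⟩ : ∃ m, j = m + 1 := ⟨j - 1, by omega⟩
            rw [hgj₀]
            exact fun h => (hstep j₂ (by omega)).2.2 h.symm
          · exact (hstep j hjj).2.1
        · rw [g0]
          exact (hstep k (by omega)).2.2
      · -- distinguishing
        intro φ hφ
        have hfφ0 : g ((φ 0).val) = c := by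
          have := hφ 0; exact this.trans g0
        have h0j : (φ 0).val = 0 ∨ (φ 0).val = j₀ := huniq _ (φ 0).isLt hfφ0
        rcases h0j with h0 | h0
        · -- φ 0 = 0
          have hphi0 : φ 0 = 0 := Fin.ext h0
          obtain ⟨e, he, hform⟩ := aut_formula (by omega) φ 0
          rcases he with he | he
          · simp only [he] at hform
            exact aut_id φ hphi0 hform
          · exfalso
            simp only [he] at hform
            have hrefl := refl_point φ hphi0 hform j₀ (by omega)
            have hq := hφ ((j₀ : ℕ) : Fin (k+2))
            rw [hrefl] at hq
            simp only [fin_val_cast (show k + 2 - j₀ < k + 2 by omega),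
                fin_val_cast (show j₀ < k + 2 by omega)] at hq
            rw [hgj₀] at hq
            have := huniq _ (by omega) hq
            omega
        · -- φ 0 = ↑j₀
          have hphi0 : φ 0 = ((j₀ : ℕ) : Fin (k+2)) := by
            rw [← Fin.cast_val_eq_self (φ 0), h0]
          obtain ⟨e, he, hform⟩ := aut_formula (by omega) φ 0
          rcases he with he | he
          · exfalso
            simp only [he] at hform
            have h2j : φ ((j₀ : ℕ) : Fin (k+2)) = ((2*j₀ - (k+2) : ℕ) : Fin (k+2)) := by
              have h := hform j₀
              rw [hphi0, zero_add, one_mul, ← Nat.cast_add] at h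
              rw [h]
              rw [show j₀ + j₀ = (2*j₀ - (k+2)) + (k+2) by omega, Nat.cast_add,
                fin_cast_self_eq_zero, add_zero]
            have hq := hφ ((j₀ : ℕ) : Fin (k+2))
            rw [h2j] at hq
            simp only [fin_val_cast (show 2*j₀ - (k+2) < k + 2 by omega),
                fin_val_cast (show j₀ < k + 2 by omega)] at hq
            rw [hgj₀] at hq
            have := huniq _ (by omega) hq
            omega
          · exfalso
            simp only [he] at hform
            obtain ⟨i, hi⟩ : ∃ i, j₀ = 2*i + 1 := ⟨j₀ / 2, by omega⟩
            have hpt : φ ((i : ℕ) : Fin (k+2)) = ((i + 1 : ℕ) : Fin (k+2)) := by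
              have h := hform i
              rw [hphi0, zero_add, neg_one_mul, ← sub_eq_add_neg,
                fin_cast_sub (show i ≤ j₀ by omega)] at h
              rw [h]
              congr 1
              omega
            have hq := hφ ((i : ℕ) : Fin (k+2))
            rw [hpt] at hq
            simp only [fin_val_cast (show i + 1 < k + 2 by omega),
                fin_val_cast (show i < k + 2 by omega)] at hq
            exact (hstep i (by omega)).2.1 hq
    · -- E2 : disjoint lists at distance j₀; unique color at 0, mirror broken at j₀
      have hdisj : ∀ x, x ∈ L 0 → x ∉ L ((j₀ : ℕ) : Fin (k+2)) := by
        intro x hx hx'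
        exact hcap ⟨x, Finset.mem_inter.mpr ⟨hx, hx'⟩⟩
      obtain ⟨c, hc⟩ := hc0
      set W : ℕ := gr Ln c j₀ 0 false (k + 2 - j₀) with hW_def
      set g : ℕ → ℕ := gr Ln c j₀ W false with hg_def
      have g0 : g 0 = c := rfl
      have hstep : ∀ j, j + 1 ≠ j₀ →
          (g (j+1) ∈ Ln (j+1) ∧ g (j+1) ≠ g j ∧ g (j+1) ≠ c) := by
        intro j hj
        rw [hg_def, gr_succ_nonsp _ _ _ _ _ hj]
        exact pick3_spec (hLn _) _ _
      have hsp : g j₀ ∈ Ln j₀ ∧ g j₀ ≠ g (j₀ - 1) ∧ g j₀ ≠ W := by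
        rw [hg_def, gr_sp_false' Ln c j₀ W (by omega)]
        exact pick3_spec (hLn _) _ _
      have hWg : g (k + 2 - j₀) = W := by
        rw [hg_def, hW_def]
        exact gr_indep Ln c j₀ false W 0 _ (by omega)
      have hgj₀c : g j₀ ≠ c := by
        intro h
        exact hdisj c hc (h ▸ hsp.1)
      have huniq : ∀ a, a < k + 2 → g a = c → a = 0 := by
        intro a ha hac
        cases a with
        | zero => rfl
        | succ j =>
          by_cases hj : j + 1 = j₀
          · exact absurd (hj ▸ hac) hgj₀c
          · exact absurd hac (hstep j hj).2.2
      refine ⟨fun v => g v.val, ?_, ?_, ?_⟩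
      · apply mem_of
        intro a ha
        cases a with
        | zero => exact hc
        | succ j =>
          by_cases hj : j + 1 = j₀
          · rw [hj]; exact hsp.1
          · exact (hstep j hj).1
      · apply proper_of
        · intro j hj
          by_cases hjj : j + 1 = j₀
          · have hj' : j = j₀ - 1 := by omega
            rw [hjj, hj']
            exact hsp.2.1
          · exact (hstep j hjj).2.1
        · rw [g0]
          exact (hstep k (by omega)).2.2
      · intro φ hφ
        have hfφ0 : g ((φ 0).val) = c := by
          have := hφ 0; exact this.trans g0
        have hphi0 : φ 0 = 0 := Fin.ext (huniq _ (φ 0).isLt hfφ0)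
        obtain ⟨e, he, hform⟩ := aut_formula (by omega) φ 0
        rcases he with he | he
        · simp only [he] at hform
          exact aut_id φ hphi0 hform
        · exfalso
          simp only [he] at hform
          have hrefl := refl_point φ hphi0 hform j₀ (by omega)
          have hq := hφ ((j₀ : ℕ) : Fin (k+2))
          rw [hrefl] at hq
          simp only [fin_val_cast (show k + 2 - j₀ < k + 2 by omega),
              fin_val_cast (show j₀ < k + 2 by omega)] at hq
          rw [hWg] at hq
          exact hsp.2.2 hq.symm
  · -- ODD CASE, k+2 = 2*t+1
    obtain ⟨t, ht⟩ := hodd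
    obtain ⟨c, hc⟩ := hc0
    set g : ℕ → ℕ := gr Ln c 0 0 false with hg_def
    have g0 : g 0 = c := rfl
    have hstep : ∀ j, g (j+1) ∈ Ln (j+1) ∧ g (j+1) ≠ g j ∧ g (j+1) ≠ c := by
      intro j
      rw [hg_def, gr_succ_nonsp _ _ _ _ _ (by omega)]
      exact pick3_spec (hLn _) _ _
    have huniq : ∀ a, a < k + 2 → g a = c → a = 0 := by
      intro a ha hac
      cases a with
      | zero => rfl
      | succ j => exact absurd hac (hstep j).2.2
    refine ⟨fun v => g v.val, ?_, ?_, ?_⟩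
    · apply mem_of
      intro a ha
      cases a with
      | zero => exact hc
      | succ j => exact (hstep j).1
    · apply proper_of
      · intro j _; exact (hstep j).2.1
      · rw [g0]; exact (hstep k).2.2
    · intro φ hφ
      have hfφ0 : g ((φ 0).val) = c := by
        have := hφ 0; exact this.trans g0
      have hphi0 : φ 0 = 0 := Fin.ext (huniq _ (φ 0).isLt hfφ0)
      obtain ⟨e, he, hform⟩ := aut_formula (by omega) φ 0
      rcases he with he | he
      · simp only [he] at hform
        exact aut_id φ hphi0 hform
      · exfalso
        simp only [he] at hform
        have hrefl := refl_point φ hphi0 hform (t+1) (by omega)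
        have hq := hφ (((t+1 : ℕ)) : Fin (k+2))
        rw [hrefl] at hq
        rw [show k + 2 - (t+1) = t by omega] at hq
        simp only [fin_val_cast (show t < k + 2 by omega),
            fin_val_cast (show t + 1 < k + 2 by omega)] at hq
        exact (hstep t).2.1 hq.symm
theorem fin_two_ne_zero' {k : ℕ} (hk : 1 ≤ k) : (2 : Fin (k+2)) ≠ 0 := by
  intro h
  have h2 : (2 : Fin (k+2)).val = (0 : Fin (k+2)).val := by rw [h]
  have e1 : (2 : Fin (k+2)).val = 2 % (k+2) := rfl
  have e0 : (0 : Fin (k+2)).val = 0 := rfl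
  rw [e1, e0, Nat.mod_eq_of_lt (by omega)] at h2
  omega

theorem not_mem0 {k : ℕ} : ¬ ProperlyListDistinguishable (cycleGraph (k+2)) 0 := by
  intro h
  obtain ⟨f, hf, -⟩ := h (fun _ => ∅) (fun _ => rfl)
  exact absurd (hf 0) (Finset.notMem_empty _)

theorem not_mem1 {k : ℕ} : ¬ ProperlyListDistinguishable (cycleGraph (k+2)) 1 := by
  intro h
  obtain ⟨f, hf, hIPD⟩ := h (fun _ => {0}) (fun _ => rfl)
  have h0 := Finset.mem_singleton.mp (hf 0)
  have h1 := Finset.mem_singleton.mp (hf 1)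
  have hadj : (cycleGraph (k+2)).Adj 0 1 := cyc_adj_iff_s7.mpr (Or.inl (zero_add 1).symm)
  exact hIPD.1 hadj (h0.trans h1.symm)

theorem not_mem2 {k : ℕ} (hk : 1 ≤ k) : ¬ ProperlyListDistinguishable (cycleGraph (k+2)) 2 := by
  intro h
  have hcard : ({0, 1} : Finset ℕ).card = 2 := by decide
  obtain ⟨f, hf, hIPD⟩ := h (fun _ => {0, 1}) (fun _ => hcard)
  have hval : ∀ v, f v = 0 ∨ f v = 1 := by
    intro v
    have := hf v
    rw [Finset.mem_insert, Finset.mem_singleton] at this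
    exact this
  have hp := hIPD.1
  have hsucc : ∀ v : Fin (k+2), f (v + 1) ≠ f v := fun v => (hp (cyc_adj_succ v)).symm
  have h2 : ∀ v : Fin (k+2), f (v + 1 + 1) = f v := by
    intro v
    have a := hsucc v
    have b := hsucc (v+1)
    rcases hval v with h1|h1 <;> rcases hval (v+1) with h1'|h1' <;>
      rcases hval (v+1+1) with h1''|h1'' <;> omega
  rcases Nat.even_or_odd k with he | ho
  · -- even cycle: rotation by 2 preserves any proper 2-coloring
    let φ : cycleGraph (k+2) ≃g cycleGraph (k+2) :=
      { toEquiv := Equiv.addRight (2 : Fin (k+2)),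
        map_rel_iff' := by
          intro u v
          simp only [Equiv.coe_addRight, cycleGraph_adj, add_sub_add_right_eq_sub] }
    have hpres : ∀ v, f (φ v) = f v := by
      intro v
      show f (v + 2) = f v
      rw [show (2 : Fin (k+2)) = 1 + 1 by norm_num, ← add_assoc]
      exact h2 v
    have hzero := hIPD.2 φ hpres 0
    have : (0 : Fin (k+2)) + 2 = 0 := hzero
    rw [zero_add] at this
    exact fin_two_ne_zero' hk this
  · -- odd cycle: no proper 2-coloring exists
    obtain ⟨r, hr⟩ := ho
    have claim : ∀ j : ℕ, f ((2*j : ℕ) : Fin (k+2)) = f 0 := by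
      intro j
      induction j with
      | zero => norm_num
      | succ j ih =>
        have hcast : (((2*(j+1) : ℕ)) : Fin (k+2)) = ((2*j : ℕ) : Fin (k+2)) + 1 + 1 := by
          push_cast; ring
        rw [hcast, h2]
        exact ih
    have hfin : ((2*(r+1) : ℕ) : Fin (k+2)) + 1 = 0 := by
      rw [show (1 : Fin (k+2)) = ((1:ℕ) : Fin (k+2)) by norm_num, ← Nat.cast_add,
        show 2*(r+1) + 1 = k + 2 by omega, fin_cast_self_eq_zero]
    have hadj : (cycleGraph (k+2)).Adj ((2*(r+1) : ℕ) : Fin (k+2)) 0 :=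
      cyc_adj_iff_s7.mpr (Or.inl hfin.symm)
    exact hp hadj (claim (r+1))

theorem main_aux {k : ℕ} (hk : 5 ≤ k) : listDistChromNum (cycleGraph (k+2)) = 3 := by
  have h3 := mem3 hk
  have hlb : ∀ j ∈ {j | ProperlyListDistinguishable (cycleGraph (k+2)) j}, 3 ≤ j := by
    intro j hj
    by_contra hlt
    push_neg at hlt
    interval_cases j
    · exact not_mem0 hj
    · exact not_mem1 hj
    · exact not_mem2 (by omega) hj
  exact le_antisymm (Nat.sInf_le h3) (le_csInf ⟨3, h3⟩ hlb)

theorem stmt_7 :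
    (∀ m : ℕ, 3 ≤ m → listDistChromNum (cycleGraph (2 * m + 1)) = 3) ∧
    (∀ n : ℕ, 4 ≤ n → listDistChromNum (cycleGraph (2 * n)) = 3) := by
  constructor
  · intro m hm
    rw [show 2*m+1 = (2*m-1) + 2 by omega]
    exact main_aux (by omega)
  · intro n hn
    rw [show 2*n = (2*n-2) + 2 by omega]
    exact main_aux (by omega)
end

section
/- For every n ≥ 1, the list-distinguishing chromatic number of the complete bipartite graph K_{n,n} equals 2n. -/
open SimpleGraph

/-- A pair of permutations of the two parts gives an automorphism of the
complete bipartite graph. -/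
def sumCongrIso {α β : Type*} (e₁ : α ≃ α) (e₂ : β ≃ β) :
    completeBipartiteGraph α β ≃g completeBipartiteGraph α β where
  toEquiv := Equiv.sumCongr e₁ e₂
  map_rel_iff' := by
    rintro (a | a) (b | b) <;> simp [completeBipartiteGraph]

theorem stmt_9 (n : ℕ) (hn : 1 ≤ n) :
    listDistChromNum (completeBipartiteGraph (Fin n) (Fin n)) = 2 * n := by
  set G := completeBipartiteGraph (Fin n) (Fin n) with hG
  have hcard : (Finset.univ : Finset (Fin n ⊕ Fin n)).card = 2 * n := by
    simp [Finset.card_univ]; ring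
  -- upper bound: 2n suffices
  have hmem : ProperlyListDistinguishable G (2 * n) := by
    intro L hL
    have hall : ∀ s : Finset (Fin n ⊕ Fin n), s.card ≤ (s.biUnion L).card := by
      intro s
      rcases s.eq_empty_or_nonempty with rfl | ⟨v, hv⟩
      · simp
      · have h1 : L v ⊆ s.biUnion L := fun x hx => Finset.mem_biUnion.2 ⟨v, hv, hx⟩
        have h2 : s.card ≤ 2 * n := hcard ▸ Finset.card_le_univ s
        calc s.card ≤ 2 * n := h2
          _ = (L v).card := (hL v).symm
          _ ≤ (s.biUnion L).card := Finset.card_le_card h1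
    obtain ⟨f, hfinj, hf⟩ :=
      (Finset.all_card_le_biUnion_card_iff_exists_injective L).1 hall
    refine ⟨f, hf, fun u w huw => hfinj.ne huw.ne, fun φ hφ v => hfinj (hφ v)⟩
  -- lower bound: any admissible k satisfies 2n ≤ k
  have hlow : ∀ k ∈ {k | ProperlyListDistinguishable G k}, 2 * n ≤ k := by
    intro k hk
    by_contra hlt
    push_neg at hlt
    obtain ⟨f, hfL, hproper, hdist⟩ := hk (fun _ => Finset.range k) (fun _ => by simp)
    have hinjL : ∀ i j : Fin n, f (Sum.inl i) = f (Sum.inl j) → i = j := by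
      intro i j hij
      by_contra hne
      have key : ∀ v, f ((sumCongrIso (Equiv.swap i j) (Equiv.refl (Fin n))) v) = f v := by
        rintro (m | m)
        · rcases eq_or_ne m i with rfl | hmi
          · simpa [sumCongrIso, Equiv.swap_apply_left] using hij.symm
          rcases eq_or_ne m j with rfl | hmj
          · simpa [sumCongrIso, Equiv.swap_apply_right] using hij
          · simp [sumCongrIso,
              Equiv.swap_apply_of_ne_of_ne (Sum.inl_injective.ne hmi) (Sum.inl_injective.ne hmj)]
        · simp [sumCongrIso,
            Equiv.swap_apply_of_ne_of_ne (Sum.inr_ne_inl : Sum.inr m ≠ Sum.inl i) (Sum.inr_ne_inl : Sum.inr m ≠ Sum.inl j)]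
      have := hdist _ key (Sum.inl i)
      simp [sumCongrIso, Equiv.swap_apply_left] at this
      exact hne this.symm
    have hinjR : ∀ i j : Fin n, f (Sum.inr i) = f (Sum.inr j) → i = j := by
      intro i j hij
      by_contra hne
      have key : ∀ v, f ((sumCongrIso (Equiv.refl (Fin n)) (Equiv.swap i j)) v) = f v := by
        rintro (m | m)
        · simp [sumCongrIso,
            Equiv.swap_apply_of_ne_of_ne (Sum.inl_ne_inr : Sum.inl m ≠ Sum.inr i) (Sum.inl_ne_inr : Sum.inl m ≠ Sum.inr j)]
        · rcases eq_or_ne m i with rfl | hmi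
          · simpa [sumCongrIso, Equiv.swap_apply_left] using hij.symm
          rcases eq_or_ne m j with rfl | hmj
          · simpa [sumCongrIso, Equiv.swap_apply_right] using hij
          · simp [sumCongrIso,
              Equiv.swap_apply_of_ne_of_ne (Sum.inr_injective.ne hmi) (Sum.inr_injective.ne hmj)]
      have := hdist _ key (Sum.inr i)
      simp [sumCongrIso, Equiv.swap_apply_left] at this
      exact hne this.symm
    have hadj : ∀ (i j : Fin n), G.Adj (Sum.inl i) (Sum.inr j) := by
      intro i j; simp [hG, completeBipartiteGraph]
    have hfinj : Function.Injective f := by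
      rintro (a | a) (b | b) hab
      · exact congrArg Sum.inl (hinjL a b hab)
      · exact absurd hab (hproper (hadj a b))
      · exact absurd hab.symm (hproper (hadj b a))
      · exact congrArg Sum.inr (hinjR a b hab)
    have h1 : (Finset.univ.image f).card = 2 * n := by
      rw [Finset.card_image_of_injective _ hfinj, hcard]
    have h2 : Finset.univ.image f ⊆ Finset.range k := by
      intro x hx
      obtain ⟨v, _, rfl⟩ := Finset.mem_image.1 hx
      exact hfL v
    have := Finset.card_le_card h2
    rw [h1, Finset.card_range] at this
    omega
  exact le_antisymm (Nat.sInf_le hmem) (le_csInf ⟨2 * n, hmem⟩ hlow)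
end

section
/- Let (T, z) be a finite rooted tree with a list assignment L on its vertices. Any proper coloring f of T with f(v) ∈ L(v) for every vertex v, in which every vertex is colored differently from all of its siblings and from its parent, is a proper distinguishing coloring of T. -/
open SimpleGraph

lemma iso_dist_fix {V : Type*} (T : SimpleGraph V) (hc : T.Connected) (φ : T ≃g T)
    (u v : V) : T.dist (φ u) (φ v) = T.dist u v := by
  have key : ∀ (ψ : T ≃g T) (a b : V), T.dist (ψ a) (ψ b) ≤ T.dist a b := by
    intro ψ a b
    obtain ⟨p, hp⟩ := hc.exists_walk_length_eq_dist a b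
    calc T.dist (ψ a) (ψ b) ≤ (p.map ψ.toHom).length := T.dist_le _
      _ = T.dist a b := by rw [Walk.length_map, hp]
  refine le_antisymm (key φ u v) ?_
  have := key φ.symm (φ u) (φ v)
  simpa using this

lemma exists_parent {V : Type*} (T : SimpleGraph V) (hc : T.Connected) (z v : V) (n : ℕ)
    (h : T.dist z v = n + 1) : ∃ p : V, T.Adj p v ∧ T.dist z p = n := by
  obtain ⟨q, hq⟩ := hc.exists_walk_length_eq_dist v z
  rw [T.dist_comm, h] at hq
  cases q with
  | nil => simp at hq
  | cons ha q' =>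
    rename_i p
    refine ⟨p, ha.symm, ?_⟩
    simp only [Walk.length_cons, Nat.succ_inj] at hq
    have h1 : T.dist z p ≤ n := by
      rw [T.dist_comm]; exact hq ▸ T.dist_le q'
    have h2 : T.dist z v ≤ T.dist z p + 1 := by
      calc T.dist z v ≤ T.dist z p + T.dist p v := hc.dist_triangle
        _ ≤ T.dist z p + 1 := by
            have : T.dist p v = 1 := (T.dist_eq_one_iff_adj).mpr ha.symm
            omega
    omega

/-- Lemma 3.3: in a rooted tree, a proper list coloring in which every vertex is colored
differently from its siblings (and from its parent, which follows from properness)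
is distinguishing for the rooted tree. -/
theorem stmt_10 {V : Type*} [Fintype V] (T : SimpleGraph V) (hT : T.IsTree) (z : V)
    (L : V → Finset ℕ) (f : V → ℕ) (hmem : ∀ v, f v ∈ L v)
    (hproper : ∀ ⦃u w : V⦄, T.Adj u w → f u ≠ f w)
    (hsib : ∀ u v p : V, u ≠ v → T.Adj p u → T.Adj p v →
      T.dist z u = T.dist z p + 1 → T.dist z v = T.dist z p + 1 → f u ≠ f v) :
    ∀ φ : T ≃g T, φ z = z → (∀ v, f (φ v) = f v) → ∀ v, φ v = v := by
  intro φ hz hcol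
  have hc : T.Connected := hT.isConnected
  suffices H : ∀ n v, T.dist z v = n → φ v = v by
    intro v; exact H (T.dist z v) v rfl
  intro n
  induction n with
  | zero =>
    intro v hv
    have : z = v := (hc.dist_eq_zero_iff).mp hv
    rw [← this, hz]
  | succ n ih =>
    intro v hv
    obtain ⟨p, hadj, hp⟩ := exists_parent T hc z v n hv
    have hφp : φ p = p := ih p hp
    by_contra hne
    have hadj' : T.Adj p (φ v) := by
      have := φ.map_adj_iff.mpr hadj
      rwa [hφp] at this
    have hdφ : T.dist z (φ v) = T.dist z p + 1 := by
      have h := iso_dist_fix T hc φ z v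
      rw [hz] at h
      rw [h, hv, hp]
    exact hsib (φ v) v p hne hadj' hadj hdφ (by rw [hv, hp]) (hcol v)
end

section
/- Fix 7 ≤ r ≤ Δ(G)+1. Let G be an (n−r+1)-connected finite graph of order n containing no complete bipartite subgraph K_{r−1,r−1}. Then χ_{D_L}(G) ≤ 2Δ(G) − (3⌊(Δ(G)+1)/r⌋ − 2). -/
open SimpleGraph

open Finset

/-- A graph is `k`-connected if it has at least `k+1` vertices and removing at most
`k-1` vertices leaves a connected graph. -/
def KConnected {V : Type*} [Fintype V] (G : SimpleGraph V) (k : ℕ) : Prop :=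
  k + 1 ≤ Fintype.card V ∧
    ∀ S : Finset V, S.card ≤ k - 1 → (G.induce {v | v ∉ S}).Connected

lemma aux_inj_ipd {V : Type*} (G : SimpleGraph V) {f : V → ℕ} (hf : Function.Injective f) :
    IsProperDistinguishing G f :=
  ⟨fun u w h he => (G.ne_of_adj h) (hf he), fun _ h v => hf (h v)⟩

lemma aux_pld_of_card_le {V : Type*} [Fintype V] (G : SimpleGraph V) {m : ℕ}
    (hm : Fintype.card V ≤ m) : ProperlyListDistinguishable G m := by
  intro L hL
  have hall : ∀ s : Finset V, s.card ≤ (s.biUnion L).card := by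
    intro s
    rcases s.eq_empty_or_nonempty with rfl | ⟨v, hv⟩
    · simp
    · calc s.card ≤ Fintype.card V := s.card_le_univ
        _ ≤ m := hm
        _ = (L v).card := (hL v).symm
        _ ≤ (s.biUnion L).card :=
          Finset.card_le_card (Finset.subset_biUnion_of_mem L hv)
  obtain ⟨f, hinj, hmem⟩ := (Finset.all_card_le_biUnion_card_iff_exists_injective L).1 hall
  exact ⟨f, hmem, aux_inj_ipd G hinj⟩



lemma aux_degree_bound {V : Type*} [Fintype V] [DecidableEq V] (G : SimpleGraph V)
    [DecidableRel G.Adj] {r : ℕ} (hr : 2 ≤ r)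
    (hconn : KConnected G (Fintype.card V - r + 1)) (v : V) :
    Fintype.card V + 1 ≤ G.degree v + r := by
  set n := Fintype.card V with hn
  set NN : Finset V := univ.filter (fun w => w ≠ v ∧ ¬ G.Adj v w) with hNN
  have hsplit : G.degree v + NN.card = n - 1 := by
    have := Finset.card_filter_add_card_filter_not
      (s := univ.erase v) (p := fun w => G.Adj v w)
    have h1 : (univ.erase v).filter (fun w => G.Adj v w) = G.neighborFinset v := by
      ext w
      simp only [mem_filter, mem_erase, mem_univ, mem_neighborFinset, true_and, and_true,
        and_iff_right_iff_imp]
      exact fun h => (G.ne_of_adj h).symm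
    have h2 : (univ.erase v).filter (fun w => ¬ G.Adj v w) = NN := by
      ext w
      rw [hNN]
      simp only [mem_filter, mem_erase, mem_univ, true_and, and_true, and_comm]
    rw [h1, h2] at this
    rw [Finset.card_erase_of_mem (mem_univ v), Finset.card_univ] at this
    exact this
  have hNNcard : NN.card + 2 ≤ r := by
    by_contra hcon
    have hle : r - 1 ≤ NN.card := by omega
    obtain ⟨T, hTsub, hTcard⟩ := Finset.exists_subset_card_eq hle
    have hvT : v ∉ T := by
      intro h
      have := hTsub h
      rw [hNN, mem_filter] at this
      exact this.2.1 rfl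
    set S : Finset V := univ \ insert v T with hS
    have hScard : S.card = n - r := by
      rw [hS, Finset.card_sdiff_of_subset (Finset.subset_univ _), Finset.card_univ,
        Finset.card_insert_of_notMem hvT, hTcard]
      omega
    have hcc := hconn.2 S (by omega)
    have hmem : ∀ w : V, w ∈ {x | x ∉ S} ↔ w ∈ insert v T := by
      intro w
      simp only [hS, Set.mem_setOf_eq, Finset.mem_sdiff, mem_univ, true_and, not_not,
        Finset.mem_insert]
    have hT : T.Nonempty := Finset.card_pos.1 (by omega)
    obtain ⟨t, ht⟩ := hT
    have htne : t ≠ v := by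
      have := hTsub ht
      rw [hNN, mem_filter] at this
      exact this.2.1
    have hreach := hcc.preconnected
      ⟨v, (hmem v).2 (Finset.mem_insert_self v T)⟩
      ⟨t, (hmem t).2 (Finset.mem_insert_of_mem ht)⟩
    obtain ⟨p⟩ := hreach
    have hnnil : ¬ p.Nil := SimpleGraph.Walk.not_nil_of_ne
      (by intro he; exact htne (congrArg Subtype.val he).symm)
    obtain ⟨b, h, q, hp⟩ := SimpleGraph.Walk.not_nil_iff.1 hnnil
    · have hadj : G.Adj v b.val := h
      have hbv : b.val ≠ v := fun he => G.irrefl (he ▸ hadj)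
      have hbT : b.val ∈ T := by
        have := b.2
        rw [hmem b.val] at this
        rcases Finset.mem_insert.1 this with h' | h'
        · exact absurd h' hbv
        · exact h'
      have := hTsub hbT
      rw [hNN, mem_filter] at this
      exact this.2.2 hadj
  omega

lemma aux_exists_asym_pair {V : Type*} [Fintype V] [DecidableEq V] (G : SimpleGraph V)
    [DecidableRel G.Adj] {r : ℕ} (hr : 3 ≤ r)
    (hdeg : ∀ v : V, (univ.filter (fun w => w ≠ v ∧ ¬ G.Adj v w)).card = r - 2)
    (hcard : Fintype.card V = 2 * r - 2)
    (hnoK : ¬ ∃ φ : completeBipartiteGraph (Fin (r - 1)) (Fin (r - 1)) →g G,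
      Function.Injective φ) :
    ∃ u v : V, u ≠ v ∧ ¬ G.Adj u v ∧
      ∃ w : V, w ≠ u ∧ w ≠ v ∧ ¬ (G.Adj w u ↔ G.Adj w v) := by
  by_contra hcon
  push_neg at hcon
  -- hcon : ∀ u v, u ≠ v → ¬ G.Adj u v → ∀ w, w ≠ u → w ≠ v → (Adj w u ↔ Adj w v)
  have hne : Nonempty V := by
    rw [← Fintype.card_pos_iff]
    omega
  obtain ⟨a⟩ := hne
  set A : Finset V := insert a (univ.filter (fun w => w ≠ a ∧ ¬ G.Adj a w)) with hA
  have haA : a ∈ A := Finset.mem_insert_self _ _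
  have hAcard : A.card = r - 1 := by
    rw [hA, Finset.card_insert_of_notMem (by simp), hdeg a]
    omega
  set B : Finset V := univ \ A with hB
  have hBcard : B.card = r - 1 := by
    rw [hB, Finset.card_sdiff_of_subset (Finset.subset_univ _), Finset.card_univ, hcard, hAcard]
    omega
  have hmemA : ∀ x : V, x ∈ A ↔ (x = a ∨ (x ≠ a ∧ ¬ G.Adj a x)) := by
    intro x
    simp [hA]
  have hcross : ∀ x ∈ A, ∀ y ∈ B, G.Adj x y := by
    intro x hx y hy
    have hyA : y ∉ A := by rw [hB] at hy; exact (Finset.mem_sdiff.1 hy).2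
    have hxy : x ≠ y := fun he => hyA (he ▸ hx)
    by_contra hnadj
    rcases (hmemA x).1 hx with hxa | ⟨hxa, hxnadj⟩
    · subst hxa
      exact hyA ((hmemA y).2 (Or.inr ⟨hxy.symm, hnadj⟩))
    · by_cases hya : y = a
      · subst hya
        exact hyA haA
      · have hiff := hcon a x (Ne.symm hxa) hxnadj y hya hxy.symm
        have hyx : ¬ G.Adj y x := fun h => hnadj (G.adj_symm h)
        have hya' : ¬ G.Adj y a := fun h => hyx (hiff.1 h)
        exact hyA ((hmemA y).2 (Or.inr ⟨hya, fun h => hya' (G.adj_symm h)⟩))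
  -- build the forbidden K_{r-1,r-1}
  have eA : (A : Type _) ≃ Fin (r - 1) :=
    Fintype.equivFinOfCardEq (by rw [Fintype.card_coe, hAcard])
  have eB : (B : Type _) ≃ Fin (r - 1) :=
    Fintype.equivFinOfCardEq (by rw [Fintype.card_coe, hBcard])
  have hABdisj : ∀ (x : V), x ∈ A → x ∈ B → False := by
    intro x hxA hxB
    rw [hB, Finset.mem_sdiff] at hxB
    exact hxB.2 hxA
  refine hnoK ⟨⟨Sum.elim (fun i => (eA.symm i : V)) (fun i => (eB.symm i : V)), ?_⟩, ?_⟩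
  · rintro (i | i) (j | j) hadj
    · simp [completeBipartiteGraph] at hadj
    · exact hcross _ (eA.symm i).2 _ (eB.symm j).2
    · exact G.adj_symm (hcross _ (eA.symm j).2 _ (eB.symm i).2)
    · simp [completeBipartiteGraph] at hadj
  · rintro (i | i) (j | j) h
    · exact congrArg Sum.inl (eA.symm.injective (Subtype.ext (by exact h)))
    · exact absurd ((by exact h : ((eA.symm i : V) = (eB.symm j : V))) ▸ (eA.symm i).2)
        (fun hmem => hABdisj _ hmem (eB.symm j).2)
    · exact absurd ((by exact h : ((eB.symm i : V) = (eA.symm j : V))).symm ▸ (eA.symm j).2)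
        (fun hmem => hABdisj _ hmem (eB.symm i).2)
    · exact congrArg Sum.inr (eB.symm.injective (Subtype.ext (by exact h)))

lemma aux_pld_pair {V : Type*} [Fintype V] [DecidableEq V] (G : SimpleGraph V)
    {u v w : V} (huv : u ≠ v) (hnadj : ¬ G.Adj u v)
    (hwu : w ≠ u) (hwv : w ≠ v) (hw : ¬ (G.Adj w u ↔ G.Adj w v)) :
    ProperlyListDistinguishable G (Fintype.card V - 1) := by
  intro L hL
  set n := Fintype.card V with hn
  have hn1 : 1 ≤ n := Fintype.card_pos_iff.2 ⟨u⟩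
  by_cases hall : ∀ s : Finset V, s.card ≤ (s.biUnion L).card
  · obtain ⟨f, hinj, hmem⟩ := (Finset.all_card_le_biUnion_card_iff_exists_injective L).1 hall
    exact ⟨f, hmem, aux_inj_ipd G hinj⟩
  · push_neg at hall
    obtain ⟨s, hs⟩ := hall
    have hsne : s.Nonempty := by
      rcases s.eq_empty_or_nonempty with rfl | h
      · simp at hs
      · exact h
    obtain ⟨x, hx⟩ := hsne
    have hsub : ∀ y ∈ s, L y ⊆ s.biUnion L := fun y hy => Finset.subset_biUnion_of_mem L hy
    have h1 : n - 1 ≤ (s.biUnion L).card := (hL x) ▸ Finset.card_le_card (hsub x hx)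
    have hscardle : s.card ≤ n := s.card_le_univ.trans_eq Finset.card_univ
    have hscard : s.card = n := by omega
    have hsuniv : s = univ := Finset.eq_univ_of_card s hscard
    have hbcard : (s.biUnion L).card = n - 1 := by omega
    have hLall : ∀ y : V, L y = s.biUnion L := by
      intro y
      exact Finset.eq_of_subset_of_card_le (hsub y (hsuniv ▸ Finset.mem_univ y))
        (by rw [hbcard, hL y])
    have e : (↑(univ.erase v) : Type _) ≃ Fin (n - 1) :=
      Fintype.equivFinOfCardEq
        (by rw [Fintype.card_coe, Finset.card_erase_of_mem (Finset.mem_univ v),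
             Finset.card_univ])
    have eC : (↑(s.biUnion L) : Type _) ≃ Fin (n - 1) :=
      Fintype.equivFinOfCardEq (by rw [Fintype.card_coe, hbcard])
    set p : V → {y // y ∈ univ.erase v} := fun y =>
      if hy : y = v then ⟨u, by simp [huv]⟩ else ⟨y, by simp [hy]⟩ with hp
    set f : V → ℕ := fun y => (eC.symm (e (p y)) : ℕ) with hf
    have hmemf : ∀ y, f y ∈ L y := by
      intro y
      rw [hLall y]
      exact (eC.symm (e (p y))).2
    have hkey : ∀ y z : V, f y = f z → y = z ∨ (y = u ∧ z = v) ∨ (y = v ∧ z = u) := by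
      intro y z hyz
      have hpe : p y = p z := e.injective (eC.symm.injective (Subtype.ext hyz))
      rw [hp] at hpe
      by_cases hy : y = v <;> by_cases hz : z = v <;>
        simp only [hy, hz, dif_pos, dif_neg, Subtype.mk.injEq, not_false_iff] at hpe ⊢ <;>
        tauto
    refine ⟨f, hmemf, ?_, ?_⟩
    · intro y z hadj he
      rcases hkey y z he with rfl | ⟨rfl, rfl⟩ | ⟨rfl, rfl⟩
      · exact G.irrefl hadj
      · exact hnadj hadj
      · exact hnadj (G.adj_symm hadj)
    · intro φ hφ
      have hfix : ∀ y : V, φ y = y ∨ (φ y = u ∧ y = v) ∨ (φ y = v ∧ y = u) :=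
        fun y => hkey (φ y) y (hφ y)
      have hφu : φ u = u := by
        by_contra hne
        have hu : φ u = v := by
          rcases hfix u with h | ⟨h1, h2⟩ | ⟨h1, h2⟩
          · exact absurd h hne
          · exact absurd h2 huv
          · exact h1
        have hv : φ v = u := by
          rcases hfix v with h | ⟨h1, h2⟩ | ⟨h1, h2⟩
          · exact absurd (φ.injective (hu.trans h.symm)) huv
          · exact h1
          · exact absurd h2 huv.symm
        have hwfix : φ w = w := by
          rcases hfix w with h | ⟨h1, h2⟩ | ⟨h1, h2⟩
          · exact h
          · exact absurd h2 hwv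
          · exact absurd h2 hwu
        refine hw ?_
        constructor
        · intro h
          have h2 := φ.map_adj_iff.2 h
          rwa [hwfix, hu] at h2
        · intro h
          have h2 := φ.map_adj_iff.2 h
          rwa [hwfix, hv] at h2
      intro y
      rcases hfix y with h | ⟨h1, h2⟩ | ⟨h1, h2⟩
      · exact h
      · subst h2
        exact absurd (φ.injective (h1.trans hφu.symm)) huv.symm
      · subst h2
        exact absurd (hφu.symm.trans h1) huv

lemma aux_card_split {V : Type*} [Fintype V] [DecidableEq V] (G : SimpleGraph V)
    [DecidableRel G.Adj] (v : V) :
    G.degree v + (univ.filter (fun w => w ≠ v ∧ ¬ G.Adj v w)).card = Fintype.card V - 1 := by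
  have h := Finset.card_filter_add_card_filter_not
    (s := univ.erase v) (p := fun w => G.Adj v w)
  have h1 : (univ.erase v).filter (fun w => G.Adj v w) = G.neighborFinset v := by
    ext w
    simp only [mem_filter, mem_erase, mem_univ, mem_neighborFinset, true_and, and_true,
      and_iff_right_iff_imp]
    exact fun hadj => (G.ne_of_adj hadj).symm
  have h2 : (univ.erase v).filter (fun w => ¬ G.Adj v w)
      = univ.filter (fun w => w ≠ v ∧ ¬ G.Adj v w) := by
    ext w
    simp only [mem_filter, mem_erase, mem_univ, true_and, and_true, and_comm]
  rw [h1, h2, Finset.card_erase_of_mem (mem_univ v), Finset.card_univ] at h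
  exact h

theorem stmt_13 {V : Type*} [Fintype V] (G : SimpleGraph V) [DecidableRel G.Adj]
    (r : ℕ) (hr7 : 7 ≤ r) (hrΔ : r ≤ G.maxDegree + 1)
    (hconn : KConnected G (Fintype.card V - r + 1))
    (hnoK : ¬ ∃ φ : completeBipartiteGraph (Fin (r - 1)) (Fin (r - 1)) →g G,
      Function.Injective φ) :
    listDistChromNum G ≤ 2 * G.maxDegree - (3 * ((G.maxDegree + 1) / r) - 2) := by
  classical
  set n := Fintype.card V with hn
  set Δ := G.maxDegree with hΔ
  set q := (Δ + 1) / r with hqdef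
  set m := 2 * Δ - (3 * q - 2) with hm
  have hq1 : 1 ≤ q := (Nat.one_le_div_iff (by omega)).2 hrΔ
  have hqr : q * r ≤ Δ + 1 := Nat.div_mul_le_self _ _
  have h7q : 7 * q ≤ Δ + 1 := le_trans (Nat.mul_le_mul_right q hr7) (by
    rw [mul_comm]; exact hqr)
  have hn1 : 1 ≤ n := by
    have := hconn.1
    omega
  have hnonempty : Nonempty V := Fintype.card_pos_iff.1 (by omega)
  have hdb : ∀ v : V, n + 1 ≤ G.degree v + r := fun v =>
    aux_degree_bound G (by omega) hconn v
  have hΔb : n + 1 ≤ Δ + r := by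
    obtain ⟨v0⟩ := hnonempty
    exact le_trans (hdb v0) (Nat.add_le_add_right (G.degree_le_maxDegree v0) r)
  by_cases hcase : n ≤ m
  · exact Nat.sInf_le (aux_pld_of_card_le G hcase)
  · push_neg at hcase
    have hq2 : q = 1 := by
      by_contra hne
      have e1 : q * r = q * (r - 3) + q * 3 := by
        rw [← Nat.mul_add]
        congr 1
        omega
      have e2 : 2 * (r - 3) ≤ q * (r - 3) := Nat.mul_le_mul_right _ (by omega)
      set P := q * (r - 3) with hP
      set Q := q * r with hQ
      clear_value P Q
      omega
    have hΔr : Δ = r - 1 := by omega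
    have hnval : n = 2 * r - 2 := by omega
    have hmval : m = n - 1 := by omega
    have hdeg : ∀ v : V, (univ.filter (fun w => w ≠ v ∧ ¬ G.Adj v w)).card = r - 2 := by
      intro v
      have h1 := aux_card_split G v
      have h2 := hdb v
      have h3 := G.degree_le_maxDegree v
      omega
    obtain ⟨u, v, huv, hnadj, w, hwu, hwv, hw⟩ :=
      aux_exists_asym_pair G (by omega) hdeg hnval hnoK
    have hpld := aux_pld_pair G huv hnadj hwu hwv hw
    exact Nat.sInf_le (show ProperlyListDistinguishable G m from hmval ▸ hpld)
end

section
/- For every finite simple graph G, the list-distinguishing chromatic number of G is at most Col(G)·D_L(G), where Col(G) is the coloring number of G and D_L(G) is the list-distinguishing number of G. -/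
open SimpleGraph

/-- back-neighborhood in the ordering -/
noncomputable def backN {V : Type*} [Fintype V] (G : SimpleGraph V) (ord : V → ℕ) (v : V) :
    Finset V :=
  @Finset.filter _ (fun u => G.Adj v u ∧ ord u < ord v) (Classical.decPred _) Finset.univ

lemma mem_backN {V : Type*} [Fintype V] {G : SimpleGraph V} {ord : V → ℕ} {v u : V} :
    u ∈ backN G ord v ↔ G.Adj v u ∧ ord u < ord v := by
  simp [backN]

noncomputable def chooseLists {V : Type*} [Fintype V] (G : SimpleGraph V) (ord : V → ℕ)
    (L : V → Finset ℕ) (d : ℕ) : V → Finset ℕ := fun v =>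
  let rest := (backN G ord v).attach.biUnion (fun u => chooseLists G ord L d u.1)
  if h : d ≤ ((L v) \ rest).card then (Finset.exists_subset_card_eq h).choose
  else L v \ rest
termination_by v => ord v
decreasing_by exact (mem_backN.mp u.2).2

lemma chooseLists_subset_sdiff {V : Type*} [Fintype V] (G : SimpleGraph V) (ord : V → ℕ)
    (L : V → Finset ℕ) (d : ℕ) (v : V) :
    chooseLists G ord L d v ⊆
      L v \ (backN G ord v).attach.biUnion (fun u => chooseLists G ord L d u.1) := by
  rw [chooseLists]
  split
  · exact (Finset.exists_subset_card_eq ‹_›).choose_spec.1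
  · exact Finset.Subset.refl _

lemma chooseLists_card {V : Type*} [Fintype V] (G : SimpleGraph V) (ord : V → ℕ)
    (L : V → Finset ℕ) (c d : ℕ) (hc : 1 ≤ c)
    (hL : ∀ v, (L v).card = c * d)
    (hN : ∀ v, (backN G ord v).card < c) :
    ∀ v, (chooseLists G ord L d v).card = d := by
  have key : ∀ n v, ord v = n → (chooseLists G ord L d v).card = d := by
    intro n
    induction n using Nat.strong_induction_on with
    | _ n ih =>
      intro v hv
      have hrest : ((backN G ord v).attach.biUnion
          (fun u => chooseLists G ord L d u.1)).card ≤ (c - 1) * d := by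
        calc ((backN G ord v).attach.biUnion (fun u => chooseLists G ord L d u.1)).card
            ≤ ∑ u ∈ (backN G ord v).attach, (chooseLists G ord L d u.1).card :=
              Finset.card_biUnion_le
          _ = (backN G ord v).attach.card * d := by
              apply Finset.sum_const_nat
              intro u _
              exact ih (ord u.1) (hv ▸ (mem_backN.mp u.2).2) u.1 rfl
          _ ≤ (c - 1) * d := by
              apply Nat.mul_le_mul_right
              rw [Finset.card_attach]
              have := hN v
              omega
      have hcond : d ≤ ((L v) \ (backN G ord v).attach.biUnion
          (fun u => chooseLists G ord L d u.1)).card := by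
        have h1 := Finset.le_card_sdiff
          ((backN G ord v).attach.biUnion (fun u => chooseLists G ord L d u.1)) (L v)
        have h2 : c * d = (c - 1) * d + d := by
          cases c with
          | zero => omega
          | succ c' => simp [Nat.succ_sub_one, Nat.succ_mul]
        have h3 := hL v
        omega
      rw [chooseLists]
      rw [dif_pos hcond]
      exact (Finset.exists_subset_card_eq hcond).choose_spec.2
  exact fun v => key (ord v) v rfl



/-- The coloring number `Col(G)`: least `k` admitting a linear ordering of the vertices in
which every vertex has fewer than `k` earlier neighbors. -/
noncomputable def coloringNumber {V : Type*} [Fintype V] (G : SimpleGraph V) : ℕ :=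
  sInf {k | ∃ ord : V → ℕ, Function.Injective ord ∧
    ∀ v, {w | G.Adj v w ∧ ord w < ord v}.ncard < k}

/-- The list-distinguishing number `D_L(G)`: least `k` such that from any lists of size `k`
there is a (not necessarily proper) coloring preserved by no nontrivial automorphism. -/
noncomputable def listDistNum {V : Type*} (G : SimpleGraph V) : ℕ :=
  sInf {k | ∀ L : V → Finset ℕ, (∀ v, (L v).card = k) →
    ∃ f : V → ℕ, (∀ v, f v ∈ L v) ∧
      ∀ φ : G ≃g G, (∀ v, f (φ v) = f v) → ∀ v, φ v = v}

theorem stmt_14 {V : Type*} [Fintype V] (G : SimpleGraph V) :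
    listDistChromNum G ≤ coloringNumber G * listDistNum G := by
  classical
  have hcol_ne : (Fintype.card V + 1) ∈ {k | ∃ ord : V → ℕ, Function.Injective ord ∧
      ∀ v, {w | G.Adj v w ∧ ord w < ord v}.ncard < k} := by
    refine ⟨fun v => ((Fintype.equivFin V) v : ℕ), ?_, ?_⟩
    · exact fun a b h => (Fintype.equivFin V).injective (Fin.val_injective h)
    · intro v
      show {w | G.Adj v w ∧ ((Fintype.equivFin V) w : ℕ) < ((Fintype.equivFin V) v : ℕ)}.ncard
        < Fintype.card V + 1
      have h1 : {w | G.Adj v w ∧ ((Fintype.equivFin V) w : ℕ) < ((Fintype.equivFin V) v : ℕ)}.ncard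
          ≤ Fintype.card V := by
        have := Set.ncard_le_ncard (Set.subset_univ
          {w | G.Adj v w ∧ ((Fintype.equivFin V) w : ℕ) < ((Fintype.equivFin V) v : ℕ)})
          Set.finite_univ
        simpa [Set.ncard_univ] using this
      omega
  have hdist_ne : Fintype.card V ∈ {k | ∀ L : V → Finset ℕ, (∀ v, (L v).card = k) →
      ∃ f : V → ℕ, (∀ v, f v ∈ L v) ∧
        ∀ φ : G ≃g G, (∀ v, f (φ v) = f v) → ∀ v, φ v = v} := by
    intro L hL
    have hall : ∀ s : Finset V, s.card ≤ (s.biUnion L).card := by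
      intro s
      rcases s.eq_empty_or_nonempty with rfl | ⟨v, hv⟩
      · simp
      · calc s.card ≤ Fintype.card V := Finset.card_le_univ s
          _ = (L v).card := (hL v).symm
          _ ≤ (s.biUnion L).card :=
              Finset.card_le_card (fun x hx => Finset.mem_biUnion.mpr ⟨v, hv, hx⟩)
    obtain ⟨f, hfi, hfm⟩ := (Finset.all_card_le_biUnion_card_iff_existsInjective' L).mp hall
    exact ⟨f, hfm, fun φ hφ v => hfi (hφ v)⟩
  have hc : coloringNumber G ∈ {k | ∃ ord : V → ℕ, Function.Injective ord ∧
      ∀ v, {w | G.Adj v w ∧ ord w < ord v}.ncard < k} := Nat.sInf_mem ⟨_, hcol_ne⟩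
  have hd : listDistNum G ∈ {k | ∀ L : V → Finset ℕ, (∀ v, (L v).card = k) →
      ∃ f : V → ℕ, (∀ v, f v ∈ L v) ∧
        ∀ φ : G ≃g G, (∀ v, f (φ v) = f v) → ∀ v, φ v = v} := Nat.sInf_mem ⟨_, hdist_ne⟩
  apply Nat.sInf_le
  show ProperlyListDistinguishable G (coloringNumber G * listDistNum G)
  obtain ⟨ord, hord, hocard⟩ := hc
  rcases isEmpty_or_nonempty V with hV | hV
  · intro L hL
    exact ⟨fun _ => 0, fun v => isEmptyElim v,
      ⟨fun u w h => isEmptyElim u, fun φ _ v => isEmptyElim v⟩⟩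
  · have hc1 : 1 ≤ coloringNumber G := by
      have := hocard (Classical.arbitrary V)
      omega
    have hN : ∀ v, (backN G ord v).card < coloringNumber G := by
      intro v
      have hset : {w | G.Adj v w ∧ ord w < ord v} = ↑(backN G ord v) := by
        ext w; simp [mem_backN]
      have := hocard v
      rwa [hset, Set.ncard_coe_finset] at this
    intro L hL
    have hcard := chooseLists_card G ord L (coloringNumber G) (listDistNum G) hc1 hL hN
    obtain ⟨f, hf1, hf2⟩ := hd (chooseLists G ord L (listDistNum G)) hcard
    have key : ∀ u w, G.Adj u w → ord u < ord w → f u ≠ f w := by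
      intro u w huw hlt heq
      have hw := chooseLists_subset_sdiff G ord L (listDistNum G) w (hf1 w)
      have hu : f u ∈ (backN G ord w).attach.biUnion
          (fun x => chooseLists G ord L (listDistNum G) x.1) :=
        Finset.mem_biUnion.mpr
          ⟨⟨u, mem_backN.mpr ⟨huw.symm, hlt⟩⟩, Finset.mem_attach _ _, hf1 u⟩
      exact (Finset.mem_sdiff.mp hw).2 (heq ▸ hu)
    refine ⟨f, fun v => ?_, ?_, hf2⟩
    · exact (Finset.mem_sdiff.mp
        (chooseLists_subset_sdiff G ord L (listDistNum G) v (hf1 v))).1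
    · intro u w huw
      have hne : ord u ≠ ord w := fun h => huw.ne (hord h)
      rcases lt_or_gt_of_ne hne with h | h
      · exact key u w huw h
      · exact fun heq => key w u huw.symm h heq.symm
end

section
/- Let G be a finite simple graph whose automorphism group is a nontrivial abelian p-group (cyclic of order p^m for a prime p, m ≥ 1, in the paper's setting). Then χ_{D_L}(G) ≤ χ_L(G) + 1. -/
open SimpleGraph

/-- The list chromatic number `χ_L(G)`. -/
noncomputable def listChromNum {V : Type*} (G : SimpleGraph V) : ℕ :=
  sInf {k | ∀ L : V → Finset ℕ, (∀ v, (L v).card = k) →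
    ∃ f : V → ℕ, (∀ v, f v ∈ L v) ∧ ∀ ⦃u w : V⦄, G.Adj u w → f u ≠ f w}

/-- Auxiliary: a system of distinct representatives from large enough lists. -/
lemma aux_injOn {V : Type*} (L : V → Finset ℕ) (s : Finset V)
    (h : ∀ v, s.card ≤ (L v).card) :
    ∃ f : V → ℕ, (∀ v ∈ s, f v ∈ L v) ∧ Set.InjOn f ↑s := by
  classical
  revert h
  induction s using Finset.cons_induction with
  | empty =>
    intro _h
    exact ⟨fun _ => 0, by simp, by simp⟩
  | cons a t ha ih =>
    intro h
    obtain ⟨f, hf, hinj⟩ := ih (fun v => by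
      have := h v
      rw [Finset.card_cons] at this
      omega)
    have hne : (L a \ t.image f).Nonempty := by
      rw [← Finset.card_pos]
      have h1 : (t.image f).card ≤ t.card := Finset.card_image_le
      have h2 : t.card + 1 ≤ (L a).card := by
        have := h a; rwa [Finset.card_cons] at this
      have h3 := Finset.le_card_sdiff (t.image f) (L a)
      omega
    obtain ⟨c, hc⟩ := hne
    rw [Finset.mem_sdiff] at hc
    refine ⟨Function.update f a c, ?_, ?_⟩
    · intro v hv
      rcases Finset.mem_cons.mp hv with rfl | hv
      · simpa using hc.1
      · have hva : v ≠ a := fun hEq => ha (by rw [← hEq]; exact hv)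
        rw [Function.update_of_ne hva]
        exact hf v hv
    · intro x hx y hy hxy
      simp only [Finset.coe_cons, Set.mem_insert_iff, Finset.mem_coe] at hx hy
      rcases hx with rfl | hx <;> rcases hy with rfl | hy
      · rfl
      · exfalso
        rw [Function.update_self, Function.update_of_ne (fun hEq => ha (by rw [← hEq]; exact hy))] at hxy
        exact hc.2 (hxy ▸ Finset.mem_image_of_mem f hy)
      · exfalso
        rw [Function.update_self, Function.update_of_ne (fun hEq => ha (by rw [← hEq]; exact hx))] at hxy
        exact hc.2 (hxy ▸ Finset.mem_image_of_mem f hx)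
      · rw [Function.update_of_ne (fun hEq => ha (by rw [← hEq]; exact hx)),
            Function.update_of_ne (fun hEq => ha (by rw [← hEq]; exact hy))] at hxy
        exact hinj (Finset.mem_coe.mpr hx) (Finset.mem_coe.mpr hy) hxy

/-- Auxiliary: every nonzero element of `ZMod (p^m)` has a multiple equal to `p^(m-1)`. -/
lemma aux_reach (p m : ℕ) (hp : p.Prime) (hm : 1 ≤ m) (x : ZMod (p ^ m)) (hx : x ≠ 0) :
    ∃ c : ℕ, c • x = ((p ^ (m - 1) : ℕ) : ZMod (p ^ m)) := by
  haveI : NeZero (p ^ m) := ⟨pow_ne_zero m hp.ne_zero⟩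
  set a := x.val with hadef
  have hax : ((a : ℕ) : ZMod (p ^ m)) = x := ZMod.natCast_rightInverse x
  have hndvd : ¬ p ^ m ∣ a := by
    intro hd
    apply hx
    rw [← hax]
    exact (ZMod.natCast_eq_zero_iff a (p ^ m)).mpr hd
  obtain ⟨j, hjm, hdj⟩ := (Nat.dvd_prime_pow hp).mp (Nat.gcd_dvd_right a (p ^ m))
  have hjm1 : j ≤ m - 1 := by
    by_contra hcon
    have hjEq : j = m := by omega
    apply hndvd
    have h1 : Nat.gcd a (p ^ m) = p ^ m := by rw [hdj, hjEq]
    exact h1 ▸ Nat.gcd_dvd_left a (p ^ m)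
  have hdvd1 : Nat.gcd a (p ^ m) ∣ p ^ (m - 1) := by
    rw [hdj]; exact pow_dvd_pow p hjm1
  have hbez := Nat.gcd_eq_gcd_ab a (p ^ m)
  have hzd : ((Nat.gcd a (p ^ m) : ℕ) : ZMod (p ^ m))
      = x * ((Nat.gcdA a (p ^ m) : ℤ) : ZMod (p ^ m)) := by
    have h2 : (((Nat.gcd a (p ^ m) : ℕ) : ℤ) : ZMod (p ^ m))
        = (((a : ℤ) * Nat.gcdA a (p ^ m) + ((p ^ m : ℕ) : ℤ) * Nat.gcdB a (p ^ m) : ℤ)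
            : ZMod (p ^ m)) := by
      exact_mod_cast congrArg (fun z : ℤ => (z : ZMod (p ^ m))) hbez
    push_cast at h2
    have h3 : ((p : ZMod (p ^ m))) ^ m = 0 := by
      rw [← Nat.cast_pow, ZMod.natCast_self]
    rw [h3, zero_mul, add_zero] at h2
    rw [← hax]
    rw [h2]
  refine ⟨((((p ^ (m - 1)) / Nat.gcd a (p ^ m) : ℕ) : ZMod (p ^ m))
      * ((Nat.gcdA a (p ^ m) : ℤ) : ZMod (p ^ m))).val, ?_⟩
  rw [nsmul_eq_mul, ZMod.natCast_val, ZMod.cast_id]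
  calc ((((p ^ (m - 1)) / Nat.gcd a (p ^ m) : ℕ) : ZMod (p ^ m))
        * ((Nat.gcdA a (p ^ m) : ℤ) : ZMod (p ^ m))) * x
      = (((p ^ (m - 1)) / Nat.gcd a (p ^ m) : ℕ) : ZMod (p ^ m))
        * (x * ((Nat.gcdA a (p ^ m) : ℤ) : ZMod (p ^ m))) := by ring
    _ = (((p ^ (m - 1)) / Nat.gcd a (p ^ m) : ℕ) : ZMod (p ^ m))
        * ((Nat.gcd a (p ^ m) : ℕ) : ZMod (p ^ m)) := by rw [hzd]
    _ = ((((p ^ (m - 1)) / Nat.gcd a (p ^ m)) * Nat.gcd a (p ^ m) : ℕ) : ZMod (p ^ m)) := by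
        push_cast; ring
    _ = ((p ^ (m - 1) : ℕ) : ZMod (p ^ m)) := by rw [Nat.div_mul_cancel hdvd1]

/-- Iterated composition of a graph automorphism. -/
def isoPow {V : Type*} {G : SimpleGraph V} (φ : G ≃g G) : ℕ → (G ≃g G)
  | 0 => RelIso.refl _
  | n + 1 => (isoPow φ n).trans φ

/-- If the automorphism group of `G` is cyclic of prime power order `p^m` (`m ≥ 1`),
then `χ_{D_L}(G) ≤ χ_L(G) + 1`. -/
theorem stmt_15 {V : Type*} [Fintype V] (G : SimpleGraph V)
    (p m : ℕ) (hp : p.Prime) (hm : 1 ≤ m)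
    (e : (G ≃g G) ≃ ZMod (p ^ m))
    (he : ∀ φ ψ : G ≃g G, e (φ.trans ψ) = e φ + e ψ) :
    listDistChromNum G ≤ listChromNum G + 1 := by
  classical
  -- the set defining the list chromatic number is nonempty
  have hSL : Set.Nonempty {k | ∀ L : V → Finset ℕ, (∀ v, (L v).card = k) →
      ∃ f : V → ℕ, (∀ v, f v ∈ L v) ∧ ∀ ⦃u w : V⦄, G.Adj u w → f u ≠ f w} := by
    refine ⟨Fintype.card V, ?_⟩
    intro L hL
    obtain ⟨f, hmem, hinj⟩ := aux_injOn L Finset.univ (fun v => by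
      rw [Finset.card_univ, hL v])
    refine ⟨f, fun v => hmem v (Finset.mem_univ v), ?_⟩
    intro u w hadj hfe
    exact hadj.ne (hinj (by simp) (by simp) hfe)
  have hk : ∀ L : V → Finset ℕ, (∀ v, (L v).card = listChromNum G) →
      ∃ f : V → ℕ, (∀ v, f v ∈ L v) ∧ ∀ ⦃u w : V⦄, G.Adj u w → f u ≠ f w :=
    Nat.sInf_mem hSL
  -- colorability from any lists of size at least `listChromNum G`
  have hshrink : ∀ L : V → Finset ℕ, (∀ v, listChromNum G ≤ (L v).card) →
      ∃ f : V → ℕ, (∀ v, f v ∈ L v) ∧ ∀ ⦃u w : V⦄, G.Adj u w → f u ≠ f w := by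
    intro L hL
    choose t htsub htcard using fun v => Finset.exists_subset_card_eq (hL v)
    obtain ⟨f, hmem, hprop⟩ := hk t htcard
    exact ⟨f, fun v => htsub v (hmem v), hprop⟩
  -- membership of `listChromNum G + 1` in the distinguishing set
  have hmemD : ProperlyListDistinguishable G (listChromNum G + 1) := by
    intro L hL
    haveI : NeZero (p ^ m) := ⟨pow_ne_zero m hp.ne_zero⟩
    have hne0 : ((p ^ (m - 1) : ℕ) : ZMod (p ^ m)) ≠ 0 := by
      rw [Ne, ZMod.natCast_eq_zero_iff]
      intro hd
      have h1 : p ^ m ≤ p ^ (m - 1) := Nat.le_of_dvd (pow_pos hp.pos _) hd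
      have h2 : p ^ (m - 1) < p ^ m := Nat.pow_lt_pow_right hp.one_lt (by omega)
      omega
    set τ : G ≃g G := e.symm ((p ^ (m - 1) : ℕ) : ZMod (p ^ m)) with hτdef
    have heτ : e τ = ((p ^ (m - 1) : ℕ) : ZMod (p ^ m)) := e.apply_symm_apply _
    have hrefl_trans : (RelIso.refl G.Adj).trans (RelIso.refl G.Adj) = RelIso.refl G.Adj :=
      RelIso.ext fun _ => rfl
    have herefl : e (RelIso.refl G.Adj) = 0 := by
      have h1 := he (RelIso.refl G.Adj) (RelIso.refl G.Adj)
      rw [hrefl_trans] at h1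
      exact left_eq_add.mp h1
    have hτu : ∃ u, τ u ≠ u := by
      by_contra hall
      push_neg at hall
      have hEq : τ = RelIso.refl G.Adj := RelIso.ext fun x => hall x
      apply hne0
      rw [← heτ, hEq, herefl]
    obtain ⟨u₀, hu₀⟩ := hτu
    -- there is a proper `L`-coloring not invariant under `τ`
    have hex : ∃ f : V → ℕ, (∀ v, f v ∈ L v) ∧ (∀ ⦃u w : V⦄, G.Adj u w → f u ≠ f w) ∧
        ∃ v, f (τ v) ≠ f v := by
      by_contra hcon
      push_neg at hcon
      have hLne : (L u₀).Nonempty := Finset.card_pos.mp (by rw [hL u₀]; omega)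
      obtain ⟨c, hc⟩ := hLne
      obtain ⟨g, hgmem, hgprop⟩ := hshrink (fun v => (L v).erase c) (fun v => by
        show listChromNum G ≤ ((L v).erase c).card
        have h1 := Finset.pred_card_le_card_erase (s := L v) (a := c)
        rw [hL v] at h1
        omega)
      have hgL : ∀ v, g v ∈ L v := fun v => Finset.mem_of_mem_erase (hgmem v)
      have hgc : ∀ v, g v ≠ c := fun v => Finset.ne_of_mem_erase (hgmem v)
      have hginv : ∀ v, g (τ v) = g v := hcon g hgL hgprop
      set h : V → ℕ := Function.update g u₀ c with hhdef
      have hhval : h u₀ = c := Function.update_self u₀ c g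
      have hhne : ∀ v, v ≠ u₀ → h v = g v := fun v hv => Function.update_of_ne hv c g
      have hhmem : ∀ v, h v ∈ L v := by
        intro v
        by_cases hv : v = u₀
        · subst hv; rw [hhval]; exact hc
        · rw [hhne v hv]; exact hgL v
      have hhprop : ∀ ⦃u w : V⦄, G.Adj u w → h u ≠ h w := by
        intro u w hadj
        by_cases hu : u = u₀ <;> by_cases hw : w = u₀
        · exfalso; rw [hu, hw] at hadj; exact G.irrefl hadj
        · subst hu; rw [hhval, hhne w hw]
          exact fun hq => hgc w hq.symm
        · subst hw; rw [hhval, hhne u hu]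
          exact hgc u
        · rw [hhne u hu, hhne w hw]
          exact hgprop hadj
      have hhinv : h (τ u₀) = h u₀ := hcon h hhmem hhprop u₀
      apply hgc u₀
      calc g u₀ = g (τ u₀) := (hginv u₀).symm
        _ = h (τ u₀) := (hhne (τ u₀) hu₀).symm
        _ = h u₀ := hhinv
        _ = c := hhval
    obtain ⟨f, hfmem, hfprop, v₁, hv₁⟩ := hex
    refine ⟨f, hfmem, hfprop, ?_⟩
    intro φ hφ
    by_contra hφn
    push_neg at hφn
    obtain ⟨v₂, hv₂⟩ := hφn
    have hφ0 : e φ ≠ 0 := by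
      intro h0
      apply hv₂
      have hEq : φ = RelIso.refl G.Adj := e.injective (by rw [h0, herefl])
      have := congrArg (fun ψ : G ≃g G => ψ v₂) hEq
      simpa using this
    obtain ⟨cc, hcc⟩ := aux_reach p m hp hm (e φ) hφ0
    have hpow_e : ∀ n, e (isoPow φ n) = n • e φ := by
      intro n
      induction n with
      | zero => simpa [isoPow] using herefl
      | succ n ih =>
        have h1 : isoPow φ (n + 1) = (isoPow φ n).trans φ := rfl
        rw [h1, he, ih, succ_nsmul]
    have hpow_pres : ∀ n v, f (isoPow φ n v) = f v := by
      intro n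
      induction n with
      | zero => intro v; rfl
      | succ n ih =>
        intro v
        have h1 : isoPow φ (n + 1) v = φ (isoPow φ n v) := rfl
        rw [h1, hφ, ih]
    have hτeq : isoPow φ cc = τ := e.injective (by rw [hpow_e, hcc, heτ])
    apply hv₁
    have := hpow_pres cc v₁
    rwa [hτeq] at this
  exact Nat.sInf_le hmemD
end

section
/- Let n ≥ 2 and write m+1 = ⌈√n⌉ with m ≥ 1. Then the distinguishing chromatic number of the book graph B_n satisfies: χ_D(B_n) = ⌈√n⌉ + 1 if m² < n ≤ m² + m + 1, and χ_D(B_n) = ⌈√n⌉ + 2 if m² + m + 2 ≤ n ≤ (m+1)². -/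
open SimpleGraph

/-- The distinguishing chromatic number `χ_D(G)`: the least `r` such that `G` has a proper
coloring with `r` colors preserved by no nontrivial automorphism. -/
noncomputable def distChromNum {V : Type*} (G : SimpleGraph V) : ℕ :=
  sInf {r | ∃ f : V → Fin r, (∀ ⦃u w : V⦄, G.Adj u w → f u ≠ f w) ∧
    ∀ φ : G ≃g G, (∀ v, f (φ v) = f v) → ∀ v, φ v = v}

/-- The book graph `B_n`: the Cartesian (box) product of the star `K_{1,n}` and `P_2`. -/
def bookGraph (n : ℕ) : SimpleGraph ((Fin 1 ⊕ Fin n) × Fin 2) :=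
  completeBipartiteGraph (Fin 1) (Fin n) □ pathGraph 2


lemma bookGraph_adj {n : ℕ} {a c : Fin 1 ⊕ Fin n} {b d : Fin 2} :
    (bookGraph n).Adj (a, b) (c, d) ↔
      ((a.isLeft ∧ c.isRight ∨ a.isRight ∧ c.isLeft) ∧ b = d) ∨ (b ≠ d ∧ a = c) := by
  simp [bookGraph, boxProd_adj, pathGraph_two_eq_top, top_adj]

lemma fin2cases (j : Fin 2) : j = 0 ∨ j = 1 := by omega

lemma fin2eq {a b c : Fin 2} (h1 : a ≠ c) (h2 : b ≠ c) : a = b := by omega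

/-- Neighbors of a page vertex `(inr i, j)`. -/
lemma adj_inr {n : ℕ} {i : Fin n} {j : Fin 2} {x : (Fin 1 ⊕ Fin n) × Fin 2}
    (h : (bookGraph n).Adj (Sum.inr i, j) x) :
    x = (Sum.inl 0, j) ∨ (x.1 = Sum.inr i ∧ x.2 ≠ j) := by
  obtain ⟨c, d⟩ := x
  rw [bookGraph_adj] at h
  rcases h with ⟨⟨h1, -⟩ | ⟨-, h2⟩, rfl⟩ | ⟨h1, rfl⟩
  · simp at h1
  · left
    obtain ⟨c', rfl⟩ := Sum.isLeft_iff.mp h2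
    simp [Fin.eq_zero c']
  · right; exact ⟨rfl, h1.symm⟩

/-- Neighbors of a hub vertex `(inl 0, j)`. -/
lemma adj_inl {n : ℕ} {j : Fin 2} {x : (Fin 1 ⊕ Fin n) × Fin 2}
    (h : (bookGraph n).Adj (Sum.inl 0, j) x) :
    (x.1 = Sum.inl 0 ∧ x.2 ≠ j) ∨ ∃ k, x = (Sum.inr k, j) := by
  obtain ⟨c, d⟩ := x
  rw [bookGraph_adj] at h
  rcases h with ⟨⟨-, h1⟩ | ⟨h2, -⟩, rfl⟩ | ⟨h1, rfl⟩
  · obtain ⟨k, rfl⟩ := Sum.isRight_iff.mp h1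
    exact Or.inr ⟨k, rfl⟩
  · simp at h2
  · exact Or.inl ⟨rfl, h1.symm⟩

/-- A vertex with three pairwise distinct neighbors is a hub. -/
lemma hub_of_three {n : ℕ} {u x y z : (Fin 1 ⊕ Fin n) × Fin 2}
    (hxy : x ≠ y) (hxz : x ≠ z) (hyz : y ≠ z)
    (hx : (bookGraph n).Adj u x) (hy : (bookGraph n).Adj u y)
    (hz : (bookGraph n).Adj u z) : u.1 = Sum.inl 0 := by
  obtain ⟨a | i, j⟩ := u
  · simp [Fin.eq_zero a]
  · exfalso
    rcases adj_inr hx with h1 | h1 <;> rcases adj_inr hy with h2 | h2 <;>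
      rcases adj_inr hz with h3 | h3
    · exact hxy (h1.trans h2.symm)
    · exact hxy (h1.trans h2.symm)
    · exact hxz (h1.trans h3.symm)
    · exact hyz (Prod.ext (h2.1.trans h3.1.symm) (fin2eq h2.2 h3.2))
    · exact hyz (h2.trans h3.symm)
    · exact hxz (Prod.ext (h1.1.trans h3.1.symm) (fin2eq h1.2 h3.2))
    · exact hxy (Prod.ext (h1.1.trans h2.1.symm) (fin2eq h1.2 h2.2))
    · exact hxy (Prod.ext (h1.1.trans h2.1.symm) (fin2eq h1.2 h2.2))

lemma adj_hub {n : ℕ} : (bookGraph n).Adj (Sum.inl 0, 0) (Sum.inl 0, 1) := by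
  rw [bookGraph_adj]; simp

lemma adj_v {n : ℕ} (i : Fin n) (j : Fin 2) :
    (bookGraph n).Adj (Sum.inl 0, j) (Sum.inr i, j) := by
  rw [bookGraph_adj]; simp

lemma adj_page {n : ℕ} (i : Fin n) :
    (bookGraph n).Adj (Sum.inr i, 0) (Sum.inr i, 1) := by
  rw [bookGraph_adj]; simp

lemma card_good (r : ℕ) (a b : Fin r) (hab : a ≠ b) :
    (Finset.univ.filter fun p : Fin r × Fin r => p.1 ≠ a ∧ p.2 ≠ b ∧ p.1 ≠ p.2).card
      + (r - 2) = (r - 1) * (r - 1) := by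
  classical
  set T : Finset (Fin r × Fin r) := (Finset.univ.erase a) ×ˢ (Finset.univ.erase b) with hTdef
  have hT : T.card = (r - 1) * (r - 1) := by
    simp [hTdef, Finset.card_erase_of_mem]
  have hfilter : (Finset.univ.filter fun p : Fin r × Fin r => p.1 ≠ a ∧ p.2 ≠ b ∧ p.1 ≠ p.2)
      = T.filter fun p => ¬ p.1 = p.2 := by
    ext ⟨x, y⟩
    simp [hTdef, Finset.mem_erase, and_comm, and_assoc]
    tauto
  have hdiag : T.filter (fun p => p.1 = p.2)
      = ((Finset.univ.erase a).erase b).image (fun x => (x, x)) := by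
    ext ⟨x, y⟩
    simp [hTdef, Finset.mem_erase]
    aesop
  have hinj : Function.Injective (fun x : Fin r => (x, x)) := by
    intro x y h; exact (Prod.ext_iff.mp h).1
  have hdcard : (T.filter (fun p => p.1 = p.2)).card = r - 2 := by
    rw [hdiag, Finset.card_image_of_injective _ hinj,
      Finset.card_erase_of_mem (Finset.mem_erase.mpr ⟨hab.symm, Finset.mem_univ b⟩),
      Finset.card_erase_of_mem (Finset.mem_univ a)]
    simp
    omega
  have key := Finset.card_filter_add_card_filter_not
    (s := T) (p := fun p => p.1 = p.2)
  rw [hfilter]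
  omega

/-- The automorphism of the book graph swapping pages `i` and `j`. -/
def pageSwap (n : ℕ) (i j : Fin n) : bookGraph n ≃g bookGraph n where
  toEquiv := Equiv.prodCongr (Equiv.sumCongr (Equiv.refl (Fin 1)) (Equiv.swap i j))
    (Equiv.refl (Fin 2))
  map_rel_iff' := by
    rintro ⟨a, b⟩ ⟨c, d⟩
    show (bookGraph n).Adj
      (Equiv.sumCongr (Equiv.refl (Fin 1)) (Equiv.swap i j) a, b)
      (Equiv.sumCongr (Equiv.refl (Fin 1)) (Equiv.swap i j) c, d) ↔ _
    rw [bookGraph_adj, bookGraph_adj]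
    have h1 : ∀ x : Fin 1 ⊕ Fin n,
        (Equiv.sumCongr (Equiv.refl (Fin 1)) (Equiv.swap i j) x).isLeft = x.isLeft := by
      rintro (x | x) <;> rfl
    have h2 : ∀ x : Fin 1 ⊕ Fin n,
        (Equiv.sumCongr (Equiv.refl (Fin 1)) (Equiv.swap i j) x).isRight = x.isRight := by
      rintro (x | x) <;> rfl
    rw [h1, h2, h1, h2, (Equiv.sumCongr (Equiv.refl (Fin 1)) (Equiv.swap i j)).injective.eq_iff]

lemma lower_bound (n r : ℕ)
    (h : ∃ f : (Fin 1 ⊕ Fin n) × Fin 2 → Fin r,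
      (∀ ⦃u w⦄, (bookGraph n).Adj u w → f u ≠ f w) ∧
      ∀ φ : bookGraph n ≃g bookGraph n, (∀ v, f (φ v) = f v) → ∀ v, φ v = v) :
    n + (r - 2) ≤ (r - 1) * (r - 1) := by
  classical
  obtain ⟨f, hprop, hdist⟩ := h
  set a := f (Sum.inl 0, 0) with ha
  set b := f (Sum.inl 0, 1) with hb
  have hab : a ≠ b := hprop adj_hub
  set S := Finset.univ.filter fun p : Fin r × Fin r => p.1 ≠ a ∧ p.2 ≠ b ∧ p.1 ≠ p.2 with hS
  have hmem : ∀ i : Fin n, (f (Sum.inr i, 0), f (Sum.inr i, 1)) ∈ S := by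
    intro i
    simp only [hS, Finset.mem_filter, Finset.mem_univ, true_and]
    exact ⟨(hprop (adj_v i 0)).symm, (hprop (adj_v i 1)).symm, hprop (adj_page i)⟩
  have hinj : Function.Injective
      (fun i : Fin n => ((f (Sum.inr i, 0), f (Sum.inr i, 1)) : Fin r × Fin r)) := by
    intro i j hij
    by_contra hne
    have hpres : ∀ v, f (pageSwap n i j v) = f v := by
      rintro ⟨x | k, l⟩
      · rfl
      · show f (Sum.inr (Equiv.swap i j k), l) = f (Sum.inr k, l)
        rcases eq_or_ne k i with rfl | hki
        · rw [Equiv.swap_apply_left]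
          rcases fin2cases l with rfl | rfl
          · exact (congrArg Prod.fst hij).symm
          · exact (congrArg Prod.snd hij).symm
        rcases eq_or_ne k j with rfl | hkj
        · rw [Equiv.swap_apply_right]
          rcases fin2cases l with rfl | rfl
          · exact congrArg Prod.fst hij
          · exact congrArg Prod.snd hij
        · rw [Equiv.swap_apply_of_ne_of_ne hki hkj]
    have h := hdist (pageSwap n i j) hpres (Sum.inr i, 0)
    have h2 : ((Sum.inr (Equiv.swap i j i), 0) : (Fin 1 ⊕ Fin n) × Fin 2) = (Sum.inr i, 0) := h
    rw [Equiv.swap_apply_left] at h2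
    exact hne (Sum.inr_injective (congrArg Prod.fst h2)).symm
  have hcard : n ≤ S.card := by
    have := Fintype.card_le_of_injective
      (fun i : Fin n => (⟨_, hmem i⟩ : {p // p ∈ S}))
      (fun i j hij => hinj (congrArg Subtype.val hij))
    simpa using this
  have hcg := card_good r a b hab
  rw [← hS] at hcg
  omega

lemma upper_bound (n r : ℕ) (hn : 2 ≤ n) (hr : 2 ≤ r)
    (hcard : n + (r - 2) ≤ (r - 1) * (r - 1)) :
    ∃ f : (Fin 1 ⊕ Fin n) × Fin 2 → Fin r,
      (∀ ⦃u w⦄, (bookGraph n).Adj u w → f u ≠ f w) ∧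
      ∀ φ : bookGraph n ≃g bookGraph n, (∀ v, f (φ v) = f v) → ∀ v, φ v = v := by
  classical
  obtain ⟨s, rfl⟩ : ∃ s, r = s + 2 := ⟨r - 2, by omega⟩
  have h01 : (0 : Fin (s + 2)) ≠ 1 := fun h => by simpa using congrArg Fin.val h
  set S := Finset.univ.filter
    fun p : Fin (s + 2) × Fin (s + 2) => p.1 ≠ 0 ∧ p.2 ≠ 1 ∧ p.1 ≠ p.2 with hS
  have hcg := card_good (s + 2) 0 1 h01
  rw [← hS] at hcg
  have hnS : n ≤ S.card := by omega
  have hemb : Nonempty (Fin n ↪ {p // p ∈ S}) := by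
    rw [Function.Embedding.nonempty_iff_card_le]
    simpa using hnS
  obtain ⟨e⟩ := hemb
  set f : (Fin 1 ⊕ Fin n) × Fin 2 → Fin (s + 2) := fun x =>
    match x with
    | (Sum.inl _, j) => if j = 0 then 0 else 1
    | (Sum.inr i, j) => if j = 0 then (e i : Fin (s+2) × Fin (s+2)).1
        else (e i : Fin (s+2) × Fin (s+2)).2
    with hf
  have he1 : ∀ i : Fin n, (e i : Fin (s+2) × Fin (s+2)).1 ≠ 0 :=
    fun i => (Finset.mem_filter.mp (e i).2).2.1
  have he2 : ∀ i : Fin n, (e i : Fin (s+2) × Fin (s+2)).2 ≠ 1 :=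
    fun i => (Finset.mem_filter.mp (e i).2).2.2.1
  have he3 : ∀ i : Fin n, (e i : Fin (s+2) × Fin (s+2)).1 ≠ (e i : Fin (s+2) × Fin (s+2)).2 :=
    fun i => (Finset.mem_filter.mp (e i).2).2.2.2
  have hfv : ∀ i : Fin n, f (Sum.inr i, 0) = (e i : Fin (s+2) × Fin (s+2)).1 := fun i => rfl
  have hfw : ∀ i : Fin n, f (Sum.inr i, 1) = (e i : Fin (s+2) × Fin (s+2)).2 := fun i => rfl
  have hf0 : ∀ y : Fin 1, f (Sum.inl y, 0) = 0 := fun y => rfl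
  have hf1 : ∀ y : Fin 1, f (Sum.inl y, 1) = 1 := fun y => rfl
  refine ⟨f, ?_, ?_⟩
  · -- proper
    rintro ⟨a, b⟩ ⟨c, d⟩ hadj
    rw [bookGraph_adj] at hadj
    rcases hadj with ⟨⟨h1, h2⟩ | ⟨h1, h2⟩, rfl⟩ | ⟨hbd, rfl⟩
    · obtain ⟨x, rfl⟩ := Sum.isLeft_iff.mp h1
      obtain ⟨k, rfl⟩ := Sum.isRight_iff.mp h2
      rcases fin2cases b with rfl | rfl
      · rw [hf0 x, hfv k]; exact (he1 k).symm
      · rw [hf1 x, hfw k]; exact (he2 k).symm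
    · obtain ⟨k, rfl⟩ := Sum.isRight_iff.mp h1
      obtain ⟨x, rfl⟩ := Sum.isLeft_iff.mp h2
      rcases fin2cases b with rfl | rfl
      · rw [hfv k, hf0 x]; exact he1 k
      · rw [hfw k, hf1 x]; exact he2 k
    · rcases a with x | k
      · rcases fin2cases b with rfl | rfl <;> rcases fin2cases d with rfl | rfl
        · exact absurd rfl hbd
        · rw [hf0 x, hf1 x]; exact h01
        · rw [hf1 x, hf0 x]; exact h01.symm
        · exact absurd rfl hbd
      · rcases fin2cases b with rfl | rfl <;> rcases fin2cases d with rfl | rfl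
        · exact absurd rfl hbd
        · rw [hfv k, hfw k]; exact he3 k
        · rw [hfw k, hfv k]; exact (he3 k).symm
        · exact absurd rfl hbd
  · -- distinguishing
    intro φ hpres
    have hhub : ∀ j : Fin 2, ∃ j' : Fin 2, φ (Sum.inl 0, j) = (Sum.inl 0, j') := by
      intro j
      have hne1 : ((Sum.inl 0, 1 - j) : (Fin 1 ⊕ Fin n) × Fin 2)
          ≠ (Sum.inr ⟨0, by omega⟩, j) := by simp
      have hne2 : ((Sum.inl 0, 1 - j) : (Fin 1 ⊕ Fin n) × Fin 2)
          ≠ (Sum.inr ⟨1, by omega⟩, j) := by simp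
      have hne3 : ((Sum.inr ⟨0, by omega⟩, j) : (Fin 1 ⊕ Fin n) × Fin 2)
          ≠ (Sum.inr ⟨1, by omega⟩, j) := by simp [Fin.ext_iff]
      have hadj1 : (bookGraph n).Adj (Sum.inl 0, j) (Sum.inl 0, 1 - j) := by
        rw [bookGraph_adj]; right; exact ⟨by omega, rfl⟩
      have hres := hub_of_three
        (φ.injective.ne hne1) (φ.injective.ne hne2) (φ.injective.ne hne3)
        (φ.map_rel_iff.mpr hadj1) (φ.map_rel_iff.mpr (adj_v ⟨0, by omega⟩ j))
        (φ.map_rel_iff.mpr (adj_v ⟨1, by omega⟩ j))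
      exact ⟨(φ (Sum.inl 0, j)).2, Prod.ext hres rfl⟩
    have hv0 : φ (Sum.inl 0, 0) = (Sum.inl 0, 0) := by
      obtain ⟨j', hj'⟩ := hhub 0
      have hc := hpres (Sum.inl 0, 0)
      rw [hj'] at hc
      rcases fin2cases j' with rfl | rfl
      · exact hj'
      · rw [hf1 0, hf0 0] at hc; exact absurd hc.symm h01
    have hw0 : φ (Sum.inl 0, 1) = (Sum.inl 0, 1) := by
      obtain ⟨j', hj'⟩ := hhub 1
      have hc := hpres (Sum.inl 0, 1)
      rw [hj'] at hc
      rcases fin2cases j' with rfl | rfl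
      · rw [hf0 0, hf1 0] at hc; exact absurd hc h01
      · exact hj'
    have hpage : ∀ (i : Fin n) (j : Fin 2), ∃ k : Fin n, φ (Sum.inr i, j) = (Sum.inr k, j) := by
      intro i j
      have hadj : (bookGraph n).Adj (Sum.inl 0, j) (φ (Sum.inr i, j)) := by
        have h := φ.map_rel_iff.mpr (adj_v i j)
        rcases fin2cases j with rfl | rfl
        · rwa [hv0] at h
        · rwa [hw0] at h
      rcases adj_inl hadj with ⟨h1, h2⟩ | ⟨k, hk⟩
      · exfalso
        have hx : φ (Sum.inr i, j) = (Sum.inl 0, 0) ∨ φ (Sum.inr i, j) = (Sum.inl 0, 1) := by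
          rcases hXeq : φ (Sum.inr i, j) with ⟨p, q⟩
          rw [hXeq] at h1
          simp only at h1
          subst h1
          rcases fin2cases q with rfl | rfl
          · exact Or.inl rfl
          · exact Or.inr rfl
        rcases hx with hx | hx
        · rw [← hv0] at hx
          exact absurd (congrArg Prod.fst (φ.injective hx)) (by simp)
        · rw [← hw0] at hx
          exact absurd (congrArg Prod.fst (φ.injective hx)) (by simp)
      · exact ⟨k, hk⟩
    intro v
    obtain ⟨y | k, l⟩ := v
    · rw [Fin.eq_zero y]
      rcases fin2cases l with rfl | rfl
      · exact hv0
      · exact hw0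
    · obtain ⟨k0, h0⟩ := hpage k 0
      obtain ⟨k1, h1⟩ := hpage k 1
      have hadj : (bookGraph n).Adj (Sum.inr k0, 0) (Sum.inr k1, 1) := by
        have h := φ.map_rel_iff.mpr (adj_page k)
        rwa [h0, h1] at h
      have hk01 : k0 = k1 := by
        rw [bookGraph_adj] at hadj
        rcases hadj with ⟨-, h⟩ | ⟨-, h⟩
        · exact absurd h (by simp [Fin.ext_iff])
        · exact Sum.inr_injective h
      subst hk01
      have hc0 := hpres (Sum.inr k, 0)
      have hc1 := hpres (Sum.inr k, 1)
      rw [h0, hfv k0, hfv k] at hc0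
      rw [h1, hfw k0, hfw k] at hc1
      have : e k0 = e k := Subtype.ext (Prod.ext hc0 hc1)
      have hkk : k0 = k := e.injective this
      subst hkk
      rcases fin2cases l with rfl | rfl
      · exact h0
      · exact h1


theorem stmt_17 (n m : ℕ) (hn : 2 ≤ n) (hm : 1 ≤ m)
    (hceil : m + 1 = ⌈Real.sqrt n⌉₊) :
    (m ^ 2 < n → n ≤ m ^ 2 + m + 1 →
      distChromNum (bookGraph n) = ⌈Real.sqrt n⌉₊ + 1) ∧
    (m ^ 2 + m + 2 ≤ n → n ≤ (m + 1) ^ 2 →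
      distChromNum (bookGraph n) = ⌈Real.sqrt n⌉₊ + 2) := by
  have hm2 : m ^ 2 = m * m := by ring
  constructor
  · intro hlo hhi
    have hcard : n + (m + 2 - 2) ≤ (m + 2 - 1) * (m + 2 - 1) := by
      have e1 : m + 2 - 2 = m := by omega
      have e2 : m + 2 - 1 = m + 1 := by omega
      rw [e1, e2]
      have e3 : (m + 1) * (m + 1) = m * m + 2 * m + 1 := by ring
      omega
    have key : distChromNum (bookGraph n) = m + 2 := by
      rw [distChromNum]
      apply le_antisymm
      · exact Nat.sInf_le (upper_bound n (m + 2) hn (by omega) hcard)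
      · refine le_csInf ⟨m + 2, upper_bound n (m + 2) hn (by omega) hcard⟩ ?_
        intro r hr
        have hl := lower_bound n r hr
        by_contra hlt
        push_neg at hlt
        have p1 : (r - 1) * (r - 1) ≤ m * m := Nat.mul_le_mul (by omega) (by omega)
        omega
    omega
  · intro hlo hhi
    have e4 : (m + 1) ^ 2 = m * m + 2 * m + 1 := by ring
    have hcard : n + (m + 3 - 2) ≤ (m + 3 - 1) * (m + 3 - 1) := by
      have e1 : m + 3 - 2 = m + 1 := by omega
      have e2 : m + 3 - 1 = m + 2 := by omega
      rw [e1, e2]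
      have e3 : (m + 2) * (m + 2) = m * m + 4 * m + 4 := by ring
      omega
    have key : distChromNum (bookGraph n) = m + 3 := by
      rw [distChromNum]
      apply le_antisymm
      · exact Nat.sInf_le (upper_bound n (m + 3) hn (by omega) hcard)
      · refine le_csInf ⟨m + 3, upper_bound n (m + 3) hn (by omega) hcard⟩ ?_
        intro r hr
        have hl := lower_bound n r hr
        by_contra hlt
        push_neg at hlt
        have p1 : (r - 1) * (r - 1) ≤ (r - 1) * (m + 1) :=
          Nat.mul_le_mul le_rfl (by omega)
        have p2 : (r - 1) * (m + 1) = (r - 1) * m + (r - 1) := by ring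
        have p3 : (r - 1) * m ≤ (m + 1) * m := Nat.mul_le_mul (by omega) le_rfl
        have p4 : (m + 1) * m = m * m + m := by ring
        omega
    omega
end
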